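/- arXiv:2604.27242 — 9 statements merged into one kernel-verified Lean document; each statement's English description precedes it below -/
import Mathlib

section
/- Let β : [0,∞) → ℝ be continuous, nonnegative and nonincreasing with β(0) = 1, and suppose there are constants K > 0 and α < 0 such that β(s)/(K·s^α) → 1 as s → ∞. Let k ≥ 1 be an integer with α·k > -1. Then for every a ∈ ℝ, the ratio (∫_{[a,a+h]×[a,a+h]} β(|s-t|)^k ds dt) / ( 2·K^k·h^{αk+2} / ((αk+2)(αk+1)) ) tends to 1 as h → ∞. -/
open MeasureTheory Filter Set intervalIntegral


lemma key (f : ℝ → ℝ) (C p : ℝ) (hC : 0 < C) (hp : -1 < p)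
    (hfc : Continuous f) (hf0 : ∀ x, 0 ≤ x → 0 ≤ f x)
    (hasym : Tendsto (fun x => f x / (C * x ^ p)) atTop (nhds 1)) :
    Tendsto (fun h : ℝ => (∫ x in (0:ℝ)..h, f x) / (C * h ^ (p+1) / (p+1)))
      atTop (nhds 1) := by
  have hp1 : 0 < p + 1 := by linarith
  set D : ℝ → ℝ := fun h => C * h ^ (p+1) / (p+1) with hD
  have hDpos : ∀ h : ℝ, 0 < h → 0 < D h := by
    intro h hh
    have : 0 < h ^ (p+1) := Real.rpow_pos_of_pos hh _
    simp only [hD]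
    positivity
  have hDtop : Tendsto D atTop atTop := by
    apply Tendsto.atTop_div_const hp1
    exact (tendsto_rpow_atTop hp1).const_mul_atTop hC
  rw [Metric.tendsto_nhds]
  intro ε hε
  have hε2 : (0:ℝ) < ε/2 := by linarith
  have h2 : ∀ᶠ x in atTop, |f x / (C * x ^ p) - 1| < ε/2 := by
    have := Metric.tendsto_nhds.mp hasym (ε/2) hε2
    simpa [Real.dist_eq] using this
  obtain ⟨X, hX⟩ := (h2.and (eventually_ge_atTop 1)).exists_forall_of_atTop
  have hX1 : (1:ℝ) ≤ X := (hX X le_rfl).2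
  have hX0 : (0:ℝ) < X := lt_of_lt_of_le one_pos hX1
  set A : ℝ := ∫ x in (0:ℝ)..X, f x with hA
  have hA0 : 0 ≤ A := intervalIntegral.integral_nonneg hX0.le (fun x hx => hf0 x hx.1)
  have hDX0 : 0 ≤ D X := (hDpos X hX0).le
  have key_bounds : ∀ h : ℝ, X ≤ h →
      (1 - ε/2) * (D h - D X) ≤ (∫ x in X..h, f x) ∧
      (∫ x in X..h, f x) ≤ (1 + ε/2) * (D h - D X) := by
    intro h hh
    have hint1 : IntervalIntegrable f volume X h := hfc.intervalIntegrable X h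
    have hxpow : ∀ c : ℝ, IntervalIntegrable (fun x : ℝ => c * (C * x ^ p)) volume X h := by
      intro c
      apply ContinuousOn.intervalIntegrable
      apply ContinuousOn.mul continuousOn_const
      apply ContinuousOn.mul continuousOn_const
      apply ContinuousOn.rpow_const continuousOn_id
      intro x hx
      rw [Set.uIcc_of_le hh] at hx
      exact Or.inl (ne_of_gt (lt_of_lt_of_le hX0 hx.1))
    have hrpow : (∫ x in X..h, C * x ^ p) = D h - D X := by
      rw [intervalIntegral.integral_const_mul, integral_rpow (Or.inl hp)]
      simp only [hD]
      ring
    constructor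
    · calc (1 - ε/2) * (D h - D X) = ∫ x in X..h, (1-ε/2) * (C * x ^ p) := by
            rw [intervalIntegral.integral_const_mul, hrpow]
        _ ≤ ∫ x in X..h, f x := by
            apply intervalIntegral.integral_mono_on hh (hxpow (1-ε/2)) hint1
            intro x hx
            have hx0 : 0 < x := lt_of_lt_of_le hX0 hx.1
            have hCx : 0 < C * x ^ p := by positivity
            have h3 := (abs_lt.mp (hX x hx.1).1).1
            exact ((lt_div_iff₀ hCx).mp (by linarith)).le
    · calc (∫ x in X..h, f x) ≤ ∫ x in X..h, (1+ε/2) * (C * x ^ p) := by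
            apply intervalIntegral.integral_mono_on hh hint1 (hxpow (1+ε/2))
            intro x hx
            have hx0 : 0 < x := lt_of_lt_of_le hX0 hx.1
            have hCx : 0 < C * x ^ p := by positivity
            have h3 := (abs_lt.mp (hX x hx.1).1).2
            exact ((div_lt_iff₀ hCx).mp (by linarith)).le
        _ = (1 + ε/2) * (D h - D X) := by
            rw [intervalIntegral.integral_const_mul, hrpow]
  have hsmall : ∀ᶠ h in atTop, A + 2 * D X < ε/2 * D h := by
    have := hDtop.eventually_gt_atTop ((A + 2 * D X) / (ε/2))
    filter_upwards [this] with h hh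
    rw [div_lt_iff₀ hε2] at hh
    linarith
  filter_upwards [hsmall, eventually_ge_atTop X] with h hsm hhX
  have hh0 : (0:ℝ) < h := lt_of_lt_of_le hX0 hhX
  have hDh : 0 < D h := hDpos h hh0
  have hsplit : (∫ x in (0:ℝ)..h, f x) = A + ∫ x in X..h, f x := by
    rw [hA, intervalIntegral.integral_add_adjacent_intervals
      (hfc.intervalIntegrable _ _) (hfc.intervalIntegrable _ _)]
  obtain ⟨hlb, hub'⟩ := key_bounds h hhX
  set I : ℝ := ∫ x in X..h, f x
  have key1 : (1 - ε) * D h < A + I := by nlinarith [mul_nonneg hε2.le hDX0]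
  have key2 : A + I < (1 + ε) * D h := by nlinarith [mul_nonneg hε2.le hDX0]
  have hq1 : (A + I) / D h < 1 + ε := (div_lt_iff₀ hDh).mpr (by linarith)
  have hq2 : 1 - ε < (A + I) / D h := (lt_div_iff₀ hDh).mpr (by linarith)
  have hfold : C * h ^ (p+1) / (p+1) = D h := rfl
  rw [Real.dist_eq, hsplit, hfold, abs_lt]
  constructor <;> linarith


lemma square_eq (f : ℝ → ℝ) (hfc : Continuous f) (hfe : ∀ x, f (-x) = f x)
    (a h : ℝ) (hh : 0 ≤ h) :
    (∫ p in (Icc a (a + h)) ×ˢ (Icc a (a + h)), f (p.1 - p.2)) =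
      2 * ∫ x in (0:ℝ)..h, (∫ u in (0:ℝ)..x, f u) := by
  have hab : a ≤ a + h := by linarith
  have hG : Continuous fun x : ℝ => ∫ u in (0:ℝ)..x, f u :=
    intervalIntegral.continuous_primitive (fun a b => hfc.intervalIntegrable a b) 0
  have hcont : Continuous fun p : ℝ × ℝ => f (p.1 - p.2) :=
    hfc.comp (continuous_fst.sub continuous_snd)
  have hint : IntegrableOn (fun p : ℝ × ℝ => f (p.1 - p.2))
      ((Icc a (a+h)) ×ˢ (Icc a (a+h))) volume := by
    exact hcont.continuousOn.integrableOn_compact (isCompact_Icc.prod isCompact_Icc)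
  have hinner : ∀ x : ℝ, (∫ y in Icc a (a+h), f (x - y)) =
      (∫ u in (0:ℝ)..(a+h-x), f u) + ∫ u in (0:ℝ)..(x-a), f u := by
    intro x
    rw [integral_Icc_eq_integral_Ioc, ← intervalIntegral.integral_of_le hab,
      intervalIntegral.integral_comp_sub_left f x,
      ← intervalIntegral.integral_add_adjacent_intervals
        (hfc.intervalIntegrable (x-(a+h)) 0) (hfc.intervalIntegrable 0 (x-a))]
    congr 1
    have e1 := intervalIntegral.integral_comp_neg f (a := 0) (b := a+h-x)
    simp only [hfe, neg_zero] at e1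
    rw [show -(a+h-x) = x-(a+h) from by ring] at e1
    exact e1.symm
  calc (∫ p in (Icc a (a + h)) ×ˢ (Icc a (a + h)), f (p.1 - p.2))
      = ∫ x in Icc a (a+h), ∫ y in Icc a (a+h), f (x - y) := by
        have hint' : IntegrableOn (fun p : ℝ × ℝ => f (p.1 - p.2))
            ((Icc a (a+h)) ×ˢ (Icc a (a+h))) (volume.prod volume) := by
          rwa [← Measure.volume_eq_prod]
        rw [Measure.volume_eq_prod, setIntegral_prod _ hint']
    _ = ∫ x in Icc a (a+h),
          ((∫ u in (0:ℝ)..(a+h-x), f u) + ∫ u in (0:ℝ)..(x-a), f u) := by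
        exact setIntegral_congr_fun measurableSet_Icc (fun x _ => hinner x)
    _ = ∫ x in a..(a+h),
          ((∫ u in (0:ℝ)..(a+h-x), f u) + ∫ u in (0:ℝ)..(x-a), f u) := by
        rw [integral_Icc_eq_integral_Ioc, ← intervalIntegral.integral_of_le hab]
    _ = (∫ x in a..(a+h), ∫ u in (0:ℝ)..(a+h-x), f u)
        + ∫ x in a..(a+h), ∫ u in (0:ℝ)..(x-a), f u := by
        apply intervalIntegral.integral_add
        · exact ((hG.comp (continuous_const.sub continuous_id)).intervalIntegrable _ _)
        · exact ((hG.comp (continuous_id.sub continuous_const)).intervalIntegrable _ _)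
    _ = 2 * ∫ x in (0:ℝ)..h, (∫ u in (0:ℝ)..x, f u) := by
        rw [intervalIntegral.integral_comp_sub_left (fun x => ∫ u in (0:ℝ)..x, f u) (a+h)]
        rw [intervalIntegral.integral_comp_sub_right (fun x => ∫ u in (0:ℝ)..x, f u) a]
        have e2 : a + h - (a+h) = 0 := by ring
        have e3 : a + h - a = h := by ring
        have e4 : a - a = 0 := by ring
        rw [e2, e3, e4]
        ring

/-- If `β : [0,∞) → ℝ` is continuous, nonnegative, nonincreasing with
`β 0 = 1` and `β s ∼ K s^α` as `s → ∞` for some `K > 0`, `α < 0`, and `k ≥ 1` is an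
integer with `α k > -1`, then for every `a`,
`∫_{[a,a+h]²} β(|s-t|)^k ∼ 2 K^k h^(αk+2) / ((αk+2)(αk+1))` as `h → ∞`. -/
theorem stmt0 (β : ℝ → ℝ) (K α : ℝ) (k : ℕ)
    (hβc : ContinuousOn β (Ici 0))
    (hβnn : ∀ s ∈ Ici (0 : ℝ), 0 ≤ β s)
    (hβmono : AntitoneOn β (Ici 0))
    (hβ0 : β 0 = 1)
    (hK : 0 < K) (hα : α < 0)
    (hasym : Tendsto (fun s : ℝ => β s / (K * s ^ α)) atTop (nhds 1))
    (hk : 1 ≤ k) (hαk : α * (k : ℝ) > -1) (a : ℝ) :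
    Tendsto (fun h : ℝ =>
      (∫ p in (Icc a (a + h)) ×ˢ (Icc a (a + h)), β |p.1 - p.2| ^ k) /
        (2 * K ^ k * h ^ (α * (k : ℝ) + 2) / ((α * (k : ℝ) + 2) * (α * (k : ℝ) + 1))))
      atTop (nhds 1) := by
  set q : ℝ := α * (k : ℝ) with hq
  have hq1 : 0 < q + 1 := by linarith
  have hq2 : 0 < q + 2 := by linarith
  set f : ℝ → ℝ := fun u => β |u| ^ k with hf
  have hfc : Continuous f := by
    apply Continuous.pow
    exact hβc.comp_continuous continuous_abs (fun x => abs_nonneg x)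
  have hfe : ∀ x, f (-x) = f x := by
    intro x; simp [hf, abs_neg]
  have hf0 : ∀ x, 0 ≤ f x := fun x => pow_nonneg (hβnn _ (abs_nonneg x)) k
  have hKk : (0:ℝ) < K ^ k := pow_pos hK k
  -- asymptotics of f
  have hfasym : Tendsto (fun x : ℝ => f x / (K ^ k * x ^ q)) atTop (nhds 1) := by
    have h1 : Tendsto (fun s : ℝ => (β s / (K * s ^ α)) ^ k) atTop (nhds 1) := by
      simpa using hasym.pow k
    apply h1.congr'
    filter_upwards [eventually_gt_atTop 0] with s hs
    rw [div_pow, mul_pow, ← Real.rpow_natCast (s ^ α) k, ← Real.rpow_mul hs.le]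
    simp [hf, abs_of_pos hs, hq]
  -- first integration
  have keyf := key f (K ^ k) q hKk hαk hfc (fun x _ => hf0 x) hfasym
  -- G = primitive of f
  set G : ℝ → ℝ := fun x => ∫ u in (0:ℝ)..x, f u with hG
  have hGc : Continuous G :=
    intervalIntegral.continuous_primitive (fun a b => hfc.intervalIntegrable a b) 0
  have hG0 : ∀ x, 0 ≤ x → 0 ≤ G x := fun x hx =>
    intervalIntegral.integral_nonneg hx (fun u _ => hf0 u)
  have hGasym : Tendsto (fun x : ℝ => G x / (K ^ k / (q+1) * x ^ (q+1))) atTop (nhds 1) := by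
    apply keyf.congr
    intro x
    rw [show K ^ k * x ^ (q+1) / (q+1) = K ^ k / (q+1) * x ^ (q+1) from by ring]
  have keyG := key G (K ^ k / (q+1)) (q+1) (by positivity) (by linarith) hGc hG0 hGasym
  -- conclude
  apply keyG.congr'
  filter_upwards [eventually_gt_atTop 0] with h hh
  have hsq : (∫ p in (Icc a (a + h)) ×ˢ (Icc a (a + h)), β |p.1 - p.2| ^ k) =
      2 * ∫ x in (0:ℝ)..h, G x := square_eq f hfc hfe a h hh.le
  rw [hsq]
  have hpow : (0:ℝ) < h ^ (q+2) := Real.rpow_pos_of_pos hh _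
  have e1 : h ^ (q+1+1) = h ^ (q+2) := by rw [show q+1+1 = q+2 from by ring]
  rw [e1]
  rw [div_eq_div_iff (by positivity) (by positivity)]
  field_simp
  ring
end

section
/- Let β : [0,∞) → ℝ be continuous, nonnegative and nonincreasing with β(0) = 1, and suppose there are constants K > 0 and α < 0 such that β(s)/(K·s^α) → 1 as s → ∞. Let k ≥ 1 be an integer with α·k < -1. Then ∫_0^∞ β(s)^k ds is finite and strictly positive, and for every a ∈ ℝ the ratio (∫_{[a,a+h]×[a,a+h]} β(|s-t|)^k ds dt) / ( 2·h·∫_0^∞ β(s)^k ds ) tends to 1 as h → ∞. -/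
/-!
Writing `g u = β |u| ^ k`, which is even, and `F x = ∫₀ˣ g`, integrating first in `t` gives
`∫_{[a,a+h]²} g (s - t) = 2 ∫₀ʰ F`. The asymptotics `β s ∼ K s^α` with `α k < -1` make `g`
integrable, so `F` tends to `∫₀^∞ β^k`, which is positive because `β 0 = 1`; hence
`h⁻¹ ∫₀ʰ F` tends to the same limit (a continuous Cesàro mean).
-/

open MeasureTheory Filter Set Topology Asymptotics intervalIntegral

theorem exists_norm_le_on_Ici_of_tendsto_atTop {E : Type*} [NormedAddCommGroup E] {F : ℝ → E}
    {L : E} (hF : Continuous F) (hlim : Tendsto F atTop (𝓝 L)) (a : ℝ) :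
    ∃ C, ∀ x ∈ Ici a, ‖F x‖ ≤ C := by
  obtain ⟨N, hN⟩ := eventually_atTop.1 (hlim.norm.eventually (gt_mem_nhds (lt_add_one ‖L‖)))
  obtain ⟨C, hC⟩ := isCompact_Icc.exists_bound_of_continuousOn (hF.continuousOn (s := Icc a N))
  refine ⟨max C (‖L‖ + 1), fun x hx => ?_⟩
  rcases le_total x N with hxN | hNx
  · exact (hC x ⟨hx, hxN⟩).trans (le_max_left _ _)
  · exact (hN x hNx).le.trans (le_max_right _ _)

section

variable {E : Type*} [NormedAddCommGroup E] [NormedSpace ℝ E]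

theorem tendsto_inv_smul_integral_of_tendsto [CompleteSpace E] {F : ℝ → E} {L : E}
    (hF : Continuous F) (hlim : Tendsto F atTop (𝓝 L)) :
    Tendsto (fun h => h⁻¹ • ∫ x in 0..h, F x) atTop (𝓝 L) := by
  obtain ⟨C, hC⟩ := exists_norm_le_on_Ici_of_tendsto_atTop hF hlim 0
  -- rescale to `∫₀¹ F (h y) dy` and use dominated convergence
  have hmean :
      Tendsto (fun h => ∫ y in (0 : ℝ)..1, F (h * y)) atTop (𝓝 (∫ _ in (0 : ℝ)..1, L)) := by
    refine tendsto_integral_filter_of_dominated_convergence (fun _ => C)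
      (.of_forall fun h => (hF.comp (continuous_const.mul continuous_id)).aestronglyMeasurable)
      ?_ intervalIntegrable_const ?_
    · filter_upwards [eventually_ge_atTop 0] with h hh
      refine .of_forall fun y hy => hC _ (mul_nonneg hh ?_)
      rw [uIoc_of_le zero_le_one] at hy
      exact hy.1.le
    · refine .of_forall fun y hy => hlim.comp (tendsto_id.atTop_mul_const ?_)
      rw [uIoc_of_le zero_le_one] at hy
      exact hy.1
  rw [intervalIntegral.integral_const, sub_zero, one_smul] at hmean
  refine hmean.congr' ?_
  filter_upwards [eventually_gt_atTop 0] with h hh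
  rw [integral_comp_mul_left F hh.ne', mul_zero, mul_one]

variable {g : ℝ → E}

theorem integral_Icc_comp_sub_of_even (hg : Continuous g) (heven : ∀ u, g (-u) = g u)
    {a b : ℝ} (hab : a ≤ b) (x : ℝ) :
    ∫ y in Icc a b, g (x - y) = (∫ u in 0..b - x, g u) + ∫ u in 0..x - a, g u := by
  rw [integral_Icc_eq_integral_Ioc, ← integral_of_le hab, integral_comp_sub_left g x,
    ← integral_add_adjacent_intervals (hg.intervalIntegrable _ 0) (hg.intervalIntegrable 0 _)]
  congr 1
  have hflip : ∫ u in 0..b - x, g u = ∫ u in 0..b - x, g (-u) := by simp only [heven]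
  rw [hflip, integral_comp_neg, neg_zero, neg_sub]

theorem integral_Icc_prod_Icc_comp_sub_of_even [CompleteSpace E] (hg : Continuous g)
    (heven : ∀ u, g (-u) = g u) (a : ℝ) {h : ℝ} (hh : 0 ≤ h) :
    ∫ p in Icc a (a + h) ×ˢ Icc a (a + h), g (p.1 - p.2) =
      (2 : ℝ) • ∫ x in 0..h, ∫ u in 0..x, g u := by
  have hab : a ≤ a + h := le_add_of_nonneg_right hh
  set F : ℝ → E := fun x => ∫ u in 0..x, g u
  have hF : Continuous F := continuous_primitive (fun _ _ => hg.intervalIntegrable _ _) 0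
  have hint : IntegrableOn (fun p : ℝ × ℝ => g (p.1 - p.2)) (Icc a (a + h) ×ˢ Icc a (a + h)) :=
    (hg.comp (continuous_fst.sub continuous_snd)).continuousOn.integrableOn_compact
      (isCompact_Icc.prod isCompact_Icc)
  rw [Measure.volume_eq_prod] at hint ⊢
  rw [setIntegral_prod _ hint]
  simp only [integral_Icc_comp_sub_of_even hg heven hab]
  have hleft : IntervalIntegrable (fun x => F (a + h - x)) volume a (a + h) :=
    (hF.comp (continuous_const.sub continuous_id)).intervalIntegrable _ _
  have hright : IntervalIntegrable (fun x => F (x - a)) volume a (a + h) :=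
    (hF.comp (continuous_id.sub continuous_const)).intervalIntegrable _ _
  rw [integral_Icc_eq_integral_Ioc, ← integral_of_le hab, integral_add hleft hright,
    integral_comp_sub_left F, integral_comp_sub_right F]
  simp only [sub_self, add_sub_cancel_left, two_smul]

end

theorem setIntegral_Ici_pos {f : ℝ → ℝ} {a : ℝ} (hf : IntegrableOn f (Ici a))
    (hnn : ∀ x ∈ Ici a, 0 ≤ f x) (hcont : ContinuousWithinAt f (Ici a) a) (ha : 0 < f a) :
    0 < ∫ x in Ici a, f x := by
  rw [setIntegral_pos_iff_support_of_nonneg_ae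
    ((ae_restrict_iff' measurableSet_Ici).2 (.of_forall hnn)) hf]
  obtain ⟨b, hab, hb⟩ := mem_nhdsGE_iff_exists_Icc_subset.1 (hcont.eventually (lt_mem_nhds ha))
  calc 0 < volume (Icc a b) := by simp [hab]
    _ ≤ volume (Function.support f ∩ Ici a) := measure_mono fun x hx => ⟨(hb hx).ne', hx.1⟩

theorem integrableOn_Ici_pow_of_tendsto_div_rpow {f : ℝ → ℝ} {a K α : ℝ} {k : ℕ}
    (hf : ContinuousOn f (Ici a)) (hasym : Tendsto (fun s => f s / (K * s ^ α)) atTop (𝓝 1))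
    (hαk : α * k < -1) : IntegrableOn (fun s => f s ^ k) (Ici a) := by
  have hequiv : (fun s => f s ^ k) ~[atTop] fun s => (K * s ^ α) ^ k :=
    (isEquivalent_of_tendsto_one hasym).pow k
  have hpow : (fun s : ℝ => (K * s ^ α) ^ k) =ᶠ[atTop] fun s => K ^ k * s ^ (α * k) := by
    filter_upwards [eventually_ge_atTop 0] with s hs
    rw [mul_pow, Real.rpow_mul hs, Real.rpow_natCast]
  exact ((hf.pow k).locallyIntegrableOn measurableSet_Ici).integrableOn_of_isBigO_atTop
    (hequiv.isBigO.trans (hpow.trans_isBigO ((isBigO_refl _ _).const_mul_left _)))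
    (integrableAtFilter_rpow_atTop_iff.2 hαk)

theorem stmt1_general (β : ℝ → ℝ) (K α : ℝ) (k : ℕ)
    (hβc : ContinuousOn β (Ici 0))
    (hβnn : ∀ s ∈ Ici (0 : ℝ), 0 ≤ β s)
    (hβ0 : β 0 = 1)
    (hasym : Tendsto (fun s : ℝ => β s / (K * s ^ α)) atTop (nhds 1))
    (hαk : α * (k : ℝ) < -1) :
    IntegrableOn (fun s => β s ^ k) (Ici 0) ∧
    (0 < ∫ s in Ici (0 : ℝ), β s ^ k) ∧
    ∀ a : ℝ, Tendsto (fun h : ℝ =>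
      (∫ p in (Icc a (a + h)) ×ˢ (Icc a (a + h)), β |p.1 - p.2| ^ k) /
        (2 * h * ∫ s in Ici (0 : ℝ), β s ^ k))
      atTop (nhds 1) := by
  have hint := integrableOn_Ici_pow_of_tendsto_div_rpow hβc hasym hαk
  have hpos : 0 < ∫ s in Ici (0 : ℝ), β s ^ k :=
    setIntegral_Ici_pos hint (fun s hs => pow_nonneg (hβnn s hs) k)
      ((hβc 0 self_mem_Ici).pow k) (by simp [hβ0])
  refine ⟨hint, hpos, fun a => ?_⟩
  set I := ∫ s in Ici (0 : ℝ), β s ^ k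
  set g : ℝ → ℝ := fun u => β |u| ^ k
  have hg : Continuous g := (hβc.comp_continuous continuous_abs abs_nonneg).pow k
  have hprim : Tendsto (fun x => ∫ u in 0..x, g u) atTop (𝓝 I) := by
    rw [show I = ∫ s in Ioi (0 : ℝ), β s ^ k from integral_Ici_eq_integral_Ioi]
    refine (intervalIntegral_tendsto_integral_Ioi 0 (hint.mono_set Ioi_subset_Ici_self)
      tendsto_id).congr' ?_
    filter_upwards [eventually_ge_atTop 0] with x hx
    refine integral_congr fun u hu => ?_
    rw [id, uIcc_of_le hx] at hu
    simp only [g, abs_of_nonneg hu.1]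
  have hmean := (tendsto_inv_smul_integral_of_tendsto
    (continuous_primitive (fun _ _ => hg.intervalIntegrable _ _) 0) hprim).div_const I
  rw [div_self hpos.ne'] at hmean
  refine hmean.congr' ?_
  filter_upwards [eventually_gt_atTop 0] with h hh
  rw [integral_Icc_prod_Icc_comp_sub_of_even hg (fun u => by simp only [g, abs_neg]) a hh.le,
    smul_eq_mul, smul_eq_mul]
  field_simp

/-- If `β : [0,∞) → ℝ` is continuous, nonnegative, nonincreasing with
`β 0 = 1` and `β s ∼ K s^α` as `s → ∞` for some `K > 0`, `α < 0`, and `k ≥ 1` is an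
integer with `α k < -1`, then `∫_0^∞ β^k` is finite and strictly positive, and for
every `a`, `∫_{[a,a+h]²} β(|s-t|)^k ∼ 2 h ∫_0^∞ β^k` as `h → ∞`. -/
theorem stmt1 (β : ℝ → ℝ) (K α : ℝ) (k : ℕ)
    (hβc : ContinuousOn β (Ici 0))
    (hβnn : ∀ s ∈ Ici (0 : ℝ), 0 ≤ β s)
    (hβmono : AntitoneOn β (Ici 0))
    (hβ0 : β 0 = 1)
    (hK : 0 < K) (hα : α < 0)
    (hasym : Tendsto (fun s : ℝ => β s / (K * s ^ α)) atTop (nhds 1))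
    (hk : 1 ≤ k) (hαk : α * (k : ℝ) < -1) :
    IntegrableOn (fun s => β s ^ k) (Ici 0) ∧
    (0 < ∫ s in Ici (0 : ℝ), β s ^ k) ∧
    ∀ a : ℝ, Tendsto (fun h : ℝ =>
      (∫ p in (Icc a (a + h)) ×ˢ (Icc a (a + h)), β |p.1 - p.2| ^ k) /
        (2 * h * ∫ s in Ici (0 : ℝ), β s ^ k))
      atTop (nhds 1) :=
  stmt1_general β K α k hβc hβnn hβ0 hasym hαk
end

section
/- Let α < -1. Then the sequence N^{α+1} · [ (1/N) · Σ_{k=1}^{N-1} (1 - k/N)·(k/N)^α ] converges, as N → ∞, to Σ_{n=1}^{∞} n^α (which is finite since α < -1). -/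
/-!
Since `N^(α+1) · (1/N) · (k/N)^α = k^α`, the sequence is the Fejér mean
`∑_{k<N} (1 - k/N) k^α` of the series `∑ k^α` (the `k = 0` term vanishes because `0^α = 0` for
`α ≠ 0`). Fejér means of an absolutely summable series converge to its sum by dominated
convergence: the weights `1 - k/N` lie in `[0, 1]` and tend to `1`.
-/

open Filter Topology Finset

theorem Summable.tendsto_sum_range_one_sub_div_smul {E : Type*} [NormedAddCommGroup E]
    [NormedSpace ℝ E] [CompleteSpace E] {a : ℕ → E} (ha : Summable (‖a ·‖)) :
    Tendsto (fun N : ℕ => ∑ k ∈ range N, (1 - (k : ℝ) / N) • a k) atTop (𝓝 (∑' k, a k)) := by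
  have hfin (N : ℕ) : ∑ k ∈ range N, (1 - (k : ℝ) / N) • a k =
      ∑' k, (range N : Set ℕ).indicator (fun k => (1 - (k : ℝ) / N) • a k) k :=
    sum_eq_tsum_indicator _ _
  simp only [hfin]
  refine tendsto_tsum_of_dominated_convergence ha (fun k => ?_) (.of_forall fun N k => ?_)
  · have hweight : Tendsto (fun N : ℕ => (1 - (k : ℝ) / N) • a k) atTop (𝓝 (a k)) := by
      simpa using (tendsto_const_div_atTop_nhds_zero_nat (k : ℝ)).const_sub 1 |>.smul_const (a k)
    refine hweight.congr' ?_
    filter_upwards [eventually_gt_atTop k] with N hN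
    simp [hN]
  · by_cases hk : k < N
    · have hN : (0 : ℝ) < N := by exact_mod_cast (Nat.zero_le k).trans_lt hk
      have hkN : (k : ℝ) / N ≤ 1 := div_le_one_of_le₀ (by exact_mod_cast hk.le) hN.le
      have hweight : ‖1 - (k : ℝ) / N‖ ≤ 1 := by
        rw [Real.norm_of_nonneg (by linarith)]
        linarith [div_nonneg k.cast_nonneg hN.le]
      simpa [hk, norm_smul] using mul_le_of_le_one_left (norm_nonneg _) hweight
    · simp [hk]

lemma Real.rpow_add_one_mul_one_div_mul_div_rpow {x y : ℝ} (hx : 0 < x) (hy : 0 ≤ y) (α c : ℝ) :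
    x ^ (α + 1) * (1 / x * (c * (y / x) ^ α)) = c * y ^ α := by
  rw [Real.div_rpow hy hx.le, Real.rpow_add_one hx.ne']
  field_simp [(Real.rpow_pos_of_pos hx α).ne']

lemma summable_nat_add_one_rpow {α : ℝ} (hα : α < -1) :
    Summable (fun n : ℕ => ((n : ℝ) + 1) ^ α) := by
  exact_mod_cast (summable_nat_add_iff 1).mpr (Real.summable_nat_rpow.mpr hα)

/-- For `α < -1`, the sequence
`N^(α+1) · (1/N) ∑_{k=1}^{N-1} (1 - k/N) (k/N)^α` converges to the (finite) series
`∑_{n=1}^∞ n^α`. -/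
theorem stmt5 (α : ℝ) (hα : α < -1) :
    Summable (fun n : ℕ => ((n : ℝ) + 1) ^ α) ∧
    Tendsto (fun N : ℕ =>
        (N : ℝ) ^ (α + 1) *
          ((1 / (N : ℝ)) * ∑ k ∈ Finset.Ico 1 N, (1 - (k : ℝ) / N) * ((k : ℝ) / N) ^ α))
      atTop (nhds (∑' n : ℕ, ((n : ℝ) + 1) ^ α)) := by
  have hα0 : α ≠ 0 := by linarith
  have hsum : Summable (fun k : ℕ => (k : ℝ) ^ α) := Real.summable_nat_rpow.mpr hα
  have hshift : ∑' k : ℕ, (k : ℝ) ^ α = ∑' n : ℕ, ((n : ℝ) + 1) ^ α := by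
    rw [hsum.tsum_eq_zero_add]
    simp [Real.zero_rpow hα0]
  refine ⟨summable_nat_add_one_rpow hα, ?_⟩
  rw [← hshift]
  refine (Summable.tendsto_sum_range_one_sub_div_smul (by simpa using hsum.abs)).congr' ?_
  filter_upwards [eventually_gt_atTop 0] with N hN
  have hNpos : (0 : ℝ) < N := by exact_mod_cast hN
  rw [range_eq_Ico, sum_eq_sum_Ico_succ_bot hN, mul_sum, mul_sum]
  simp only [Nat.cast_zero, Real.zero_rpow hα0, mul_zero, zero_add, smul_eq_mul]
  refine Finset.sum_congr rfl fun k _ => ?_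
  rw [Real.rpow_add_one_mul_one_div_mul_div_rpow hNpos k.cast_nonneg]
end

section
/- Let ν : ℝ → [0,∞) be a measurable even function bounded above by a constant C₀, and suppose there are constants K > 0 and γ ∈ (-1,0) such that ν(s)/(K·s^γ) → 1 as s → +∞. Let m ≥ 1 be an integer and let α, β ∈ (-1,0) satisfy (m-1)γ > -1 and α + β + (m-1)γ > -2. Then there exist constants 0 < c ≤ C and h₀ > 0 such that for all h ≥ h₀: c · h^{α+β+(m-1)γ+3} ≤ ∫_{[0,h]³} (s-u)₊^α · (s-v)₊^β · ν(u-v)^{m-1} ds du dv ≤ C · h^{α+β+(m-1)γ+3}. -/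
/-
Write `w = ν ^ (m - 1)` and `δ = (m - 1) γ`; the asymptotics of `ν` give `w t ≍ |t| ^ δ` for large
`|t|` and, with the bound `C₀`, `w t ≤ M |t| ^ δ` for all `t ≠ 0`.

Lower bound: on the box `[3h/4, h] × [h/4, h/2] × [0, h/8]` of volume `h³/128` the differences
`s - u`, `s - v`, `u - v` all lie in `[h/8, h]`, so the integrand is at least
`(K/2) ^ (m - 1) h ^ (α + β + δ)` there.

Upper bound: `(s - u)₊^α (s - v)₊^β` alone need not be integrable near `s = u = v`, since
`α + β` may be `≤ -1`. Off the diagonal, say `u < v`, both `s - v` and `v - u` are at most `s - u`,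
so for a split `α = α₁ + α₂` into nonpositive parts `(s - u)^α ≤ (s - v)^α₁ (v - u)^α₂`. Choosing
the split with `α₁ + β > -1` and `α₂ + δ > -1` (possible because `α + β + δ > -2`) bounds the
integrand by `M (s - v)₊^(α₁ + β) (v - u)₊^(α₂ + δ)`, a product of two integrable one-variable
singularities, and Tonelli gives `C h ^ (α + β + δ + 3)`.
-/

open MeasureTheory Filter Set
open scoped ENNReal

/-- `(a)₊^p`: `a ^ p` (real power) when `a > 0`, and `0` when `a ≤ 0`. -/
noncomputable def posPow (a p : ℝ) : ℝ := if 0 < a then a ^ p else 0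

lemma posPow_of_pos {a : ℝ} (ha : 0 < a) (p : ℝ) : posPow a p = a ^ p := if_pos ha

lemma posPow_of_nonpos {a : ℝ} (ha : a ≤ 0) (p : ℝ) : posPow a p = 0 := if_neg ha.not_gt

lemma posPow_nonneg (a p : ℝ) : 0 ≤ posPow a p := by
  unfold posPow; split_ifs with ha
  exacts [Real.rpow_nonneg ha.le p, le_rfl]

@[fun_prop]
lemma measurable_posPow (p : ℝ) : Measurable fun a => posPow a p :=
  Measurable.ite measurableSet_Ioi (by fun_prop) measurable_const

lemma posPow_mul_posPow_le {x y s q₁ q₂ r : ℝ} (hxy : x < y) (hq₁ : q₁ ≤ 0) (hq₂ : q₂ ≤ 0) :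
    posPow (s - x) (q₁ + q₂) * posPow (s - y) r ≤ posPow (y - x) q₂ * posPow (s - y) (q₁ + r) := by
  rcases le_or_gt (s - y) 0 with hsy | hsy
  · simp [posPow_of_nonpos hsy]
  have hsx : 0 < s - x := by linarith
  have hyx : 0 < y - x := by linarith
  rw [posPow_of_pos hsx, posPow_of_pos hyx, posPow_of_pos hsy, posPow_of_pos hsy,
    Real.rpow_add hsx, Real.rpow_add hsy]
  calc (s - x) ^ q₁ * (s - x) ^ q₂ * (s - y) ^ r ≤ (s - y) ^ q₁ * (y - x) ^ q₂ * (s - y) ^ r := by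
        gcongr ?_ * ?_ * _
        · exact Real.rpow_le_rpow_of_nonpos hsy (by linarith) hq₁
        · exact Real.rpow_le_rpow_of_nonpos hyx (by linarith) hq₂
    _ = (y - x) ^ q₂ * ((s - y) ^ q₁ * (s - y) ^ r) := by ring

lemma posPow_mul_posPow_mul_le {x y s q₁ q₂ r W M δ : ℝ} (hxy : x < y) (hq₁ : q₁ ≤ 0) (hq₂ : q₂ ≤ 0)
    (hW : W ≤ M * (y - x) ^ δ) (hW0 : 0 ≤ W) :
    posPow (s - x) (q₁ + q₂) * posPow (s - y) r * W ≤
      M * (posPow (s - y) (q₁ + r) * posPow (y - x) (q₂ + δ)) := by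
  have hyx : 0 < y - x := by linarith
  calc posPow (s - x) (q₁ + q₂) * posPow (s - y) r * W
      ≤ posPow (y - x) q₂ * posPow (s - y) (q₁ + r) * W := by
        gcongr ?_ * _; exact posPow_mul_posPow_le hxy hq₁ hq₂
    _ = posPow (s - y) (q₁ + r) * (posPow (y - x) q₂ * W) := by ring
    _ ≤ posPow (s - y) (q₁ + r) * ((y - x) ^ q₂ * (M * (y - x) ^ δ)) := by
        rw [posPow_of_pos hyx]; gcongr; exact posPow_nonneg _ _
    _ = M * (posPow (s - y) (q₁ + r) * posPow (y - x) (q₂ + δ)) := by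
        rw [posPow_of_pos hyx, Real.rpow_add hyx]; ring

lemma exists_nonpos_split {a b δ : ℝ} (ha : a < 0) (hb : -1 < b) (hδ : -1 < δ)
    (habδ : -2 < a + b + δ) :
    ∃ a₁ a₂ : ℝ, a₁ + a₂ = a ∧ a₁ ≤ 0 ∧ a₂ ≤ 0 ∧ -1 < a₁ + b ∧ -1 < a₂ + δ := by
  obtain ⟨x, hx₁, hx₂⟩ := exists_between (show max a (-1 - δ) < min 0 (a + 1 + b) by
    simp only [max_lt_iff, lt_min_iff]; refine ⟨⟨?_, ?_⟩, ?_, ?_⟩ <;> linarith)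
  simp only [max_lt_iff, lt_min_iff] at hx₁ hx₂
  exact ⟨a - x, x, by ring, by linarith, by linarith, by linarith, by linarith⟩

lemma mul_rpow_div_mul_rpow_div {h p q : ℝ} (hh : 0 ≤ h) (hp : 0 < p) (hq : 0 < q) :
    h * (h ^ p / p * (h ^ q / q)) = h ^ (p + q + 1) / (p * q) := by
  rw [Real.rpow_add' hh (by linarith), Real.rpow_add' hh (by linarith), Real.rpow_one]
  field_simp

lemma lintegral_Icc_comp_sub_le {g : ℝ → ℝ≥0∞} (hg : ∀ t ≤ 0, g t = 0) {c h : ℝ} (hc : c ≤ h) :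
    ∫⁻ x in Icc 0 h, g (c - x) ≤ ∫⁻ t in Ioc 0 h, g t := by
  have hcx : ∀ x ∈ Icc 0 h, g (c - x) = (Ioc 0 h).indicator g (c - x) := by
    intro x hx
    by_cases hpos : 0 < c - x
    · rw [indicator_of_mem (show c - x ∈ Ioc 0 h from ⟨hpos, by linarith [hx.1]⟩)]
    · rw [hg _ (not_lt.1 hpos), indicator_apply_eq_zero.2 fun _ => hg _ (not_lt.1 hpos)]
  calc ∫⁻ x in Icc 0 h, g (c - x) = ∫⁻ x in Icc 0 h, (Ioc 0 h).indicator g (c - x) :=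
        setLIntegral_congr_fun measurableSet_Icc hcx
    _ ≤ ∫⁻ x, (Ioc 0 h).indicator g (c - x) := setLIntegral_le_lintegral _ _
    _ = ∫⁻ t in Ioc 0 h, g t := by
        rw [lintegral_sub_left_eq_self, lintegral_indicator measurableSet_Ioc]

lemma lintegral_Ioc_posPow {q h : ℝ} (hq : -1 < q) (hh : 0 ≤ h) :
    ∫⁻ t in Ioc 0 h, ENNReal.ofReal (posPow t q) = ENNReal.ofReal (h ^ (q + 1) / (q + 1)) := by
  have hint : IntegrableOn (fun t : ℝ => t ^ q) (Ioc 0 h) :=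
    (intervalIntegrable_iff_integrableOn_Ioc_of_le hh).1
      (intervalIntegral.intervalIntegrable_rpow' hq)
  rw [setLIntegral_congr_fun measurableSet_Ioc fun t ht => by rw [posPow_of_pos ht.1],
    ← ofReal_integral_eq_lintegral_ofReal hint
      ((ae_restrict_iff' measurableSet_Ioc).2 (ae_of_all _ fun t ht => Real.rpow_nonneg ht.1.le q)),
    ← intervalIntegral.integral_of_le hh, integral_rpow (Or.inl hq),
    Real.zero_rpow (by linarith), sub_zero]

lemma volume_restrict_prod {α β : Type*} [MeasureSpace α] [MeasureSpace β]
    [SFinite (volume : Measure α)] [SFinite (volume : Measure β)] (s : Set α) (t : Set β) :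
    (volume : Measure (α × β)).restrict (s ×ˢ t) =
      (volume.restrict s).prod (volume.restrict t) := by
  rw [Measure.volume_eq_prod, Measure.prod_restrict]

lemma ae_fst_ne_snd : ∀ᵐ q : ℝ × ℝ, q.1 ≠ q.2 := by
  let φ : ℝ × ℝ →ₗ[ℝ] ℝ := LinearMap.fst ℝ ℝ ℝ - LinearMap.snd ℝ ℝ ℝ
  have hφ : {q : ℝ × ℝ | ¬q.1 ≠ q.2} = (LinearMap.ker φ : Set (ℝ × ℝ)) := by
    ext q; simp [φ, sub_eq_zero]
  have : (volume : Measure (ℝ × ℝ)).IsAddHaarMeasure := by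
    rw [Measure.volume_eq_prod]; infer_instance
  rw [ae_iff, hφ]
  refine Measure.addHaar_submodule _ _ fun htop => ?_
  have := htop ▸ Submodule.mem_top (x := ((1 : ℝ), (0 : ℝ)))
  simp [φ] at this

section Cube

variable {h : ℝ}

lemma lintegral_square_le {f g : ℝ → ℝ≥0∞} (hf : Measurable f) (hg : Measurable g)
    (hf0 : ∀ t ≤ 0, f t = 0) (hg0 : ∀ t ≤ 0, g t = 0) {c : ℝ} (hc : c ≤ h) :
    ∫⁻ q in Icc 0 h ×ˢ Icc 0 h, f (c - q.1) * g (q.1 - q.2) ≤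
      (∫⁻ t in Ioc 0 h, f t) * ∫⁻ t in Ioc 0 h, g t := by
  rw [volume_restrict_prod]
  calc _ ≤ ∫⁻ u in Icc 0 h, ∫⁻ v in Icc 0 h, f (c - u) * g (u - v) := lintegral_prod_le _
    _ = ∫⁻ u in Icc 0 h, f (c - u) * ∫⁻ v in Icc 0 h, g (u - v) := by
        refine lintegral_congr fun u => ?_
        exact lintegral_const_mul _ (hg.comp (measurable_const.sub measurable_id))
    _ ≤ ∫⁻ u in Icc 0 h, f (c - u) * ∫⁻ t in Ioc 0 h, g t :=
        setLIntegral_mono' measurableSet_Icc fun u hu =>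
          mul_le_mul_right (lintegral_Icc_comp_sub_le hg0 hu.2) _
    _ ≤ (∫⁻ t in Ioc 0 h, f t) * ∫⁻ t in Ioc 0 h, g t := by
        rw [lintegral_mul_const (f := fun u => f (c - u)) _
          (hf.comp (measurable_const.sub measurable_id))]
        exact mul_le_mul_left (lintegral_Icc_comp_sub_le hf0 hc) _

lemma lintegral_square_swap_le {f g : ℝ → ℝ≥0∞} (hf : Measurable f) (hg : Measurable g)
    (hf0 : ∀ t ≤ 0, f t = 0) (hg0 : ∀ t ≤ 0, g t = 0) {c : ℝ} (hc : c ≤ h) :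
    ∫⁻ q in Icc 0 h ×ˢ Icc 0 h, f (c - q.2) * g (q.2 - q.1) ≤
      (∫⁻ t in Ioc 0 h, f t) * ∫⁻ t in Ioc 0 h, g t := by
  rw [volume_restrict_prod, ← lintegral_prod_swap]
  simpa only [volume_restrict_prod, Prod.fst_swap, Prod.snd_swap] using
    lintegral_square_le hf hg hf0 hg0 hc

lemma lintegral_cube_le {F : ℝ × ℝ × ℝ → ℝ≥0∞} {C : ℝ≥0∞}
    (hF : ∀ s ∈ Icc 0 h, ∫⁻ q in Icc 0 h ×ˢ Icc 0 h, F (s, q) ≤ C) :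
    ∫⁻ p in Icc 0 h ×ˢ Icc 0 h ×ˢ Icc 0 h, F p ≤ ENNReal.ofReal h * C := by
  rw [volume_restrict_prod]
  calc _ ≤ ∫⁻ s in Icc 0 h, ∫⁻ q in Icc 0 h ×ˢ Icc 0 h, F (s, q) := lintegral_prod_le _
    _ ≤ ∫⁻ _ in Icc 0 h, C := setLIntegral_mono' measurableSet_Icc hF
    _ = ENNReal.ofReal h * C := by
        rw [setLIntegral_const, Real.volume_Icc, sub_zero, mul_comm]

end Cube

lemma nonneg_of_le_mul_abs_rpow {w : ℝ → ℝ} {M δ : ℝ} (hw0 : ∀ t, 0 ≤ w t)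
    (hwM : ∀ t ≠ 0, w t ≤ M * |t| ^ δ) : 0 ≤ M := by
  simpa using (hw0 1).trans (hwM 1 one_ne_zero)

section UpperBound

variable {w : ℝ → ℝ} {M δ : ℝ} (hw0 : ∀ t, 0 ≤ w t) (hwM : ∀ t ≠ 0, w t ≤ M * |t| ^ δ)
  {α β α₁ α₂ β₁ β₂ : ℝ} (hα : α₁ + α₂ = α) (hβ : β₁ + β₂ = β)
  (hα₁ : α₁ ≤ 0) (hα₂ : α₂ ≤ 0) (hβ₁ : β₁ ≤ 0) (hβ₂ : β₂ ≤ 0)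
include hw0 hwM hα hβ hα₁ hα₂ hβ₁ hβ₂

lemma posPow_mul_posPow_mul_le_add_of_ne {s u v : ℝ} (huv : u ≠ v) :
    posPow (s - u) α * posPow (s - v) β * w (u - v) ≤
      M * (posPow (s - v) (α₁ + β) * posPow (v - u) (α₂ + δ) +
        posPow (s - u) (β₁ + α) * posPow (u - v) (β₂ + δ)) := by
  have hM0 : 0 ≤ M := nonneg_of_le_mul_abs_rpow hw0 hwM
  have hP := mul_nonneg (posPow_nonneg (s - v) (α₁ + β)) (posPow_nonneg (v - u) (α₂ + δ))
  have hQ := mul_nonneg (posPow_nonneg (s - u) (β₁ + α)) (posPow_nonneg (u - v) (β₂ + δ))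
  have hW := hwM (u - v) (sub_ne_zero.2 huv)
  rcases huv.lt_or_gt with huv | hvu
  · rw [abs_sub_comm, abs_of_pos (sub_pos.2 huv)] at hW
    calc posPow (s - u) α * posPow (s - v) β * w (u - v)
        ≤ M * (posPow (s - v) (α₁ + β) * posPow (v - u) (α₂ + δ)) := by
          rw [← hα]; exact posPow_mul_posPow_mul_le huv hα₁ hα₂ hW (hw0 _)
      _ ≤ _ := mul_le_mul_of_nonneg_left (le_add_of_nonneg_right hQ) hM0
  · rw [abs_of_pos (sub_pos.2 hvu)] at hW
    calc posPow (s - u) α * posPow (s - v) β * w (u - v)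
        = posPow (s - v) (β₁ + β₂) * posPow (s - u) α * w (u - v) := by rw [hβ]; ring
      _ ≤ M * (posPow (s - u) (β₁ + α) * posPow (u - v) (β₂ + δ)) :=
          posPow_mul_posPow_mul_le hvu hβ₁ hβ₂ hW (hw0 _)
      _ ≤ _ := mul_le_mul_of_nonneg_left (le_add_of_nonneg_left hP) hM0

lemma lintegral_square_integrand_le {s h : ℝ} (hs : s ≤ h) (hh : 0 ≤ h)
    (hα₁β : -1 < α₁ + β) (hα₂δ : -1 < α₂ + δ) (hβ₁α : -1 < β₁ + α) (hβ₂δ : -1 < β₂ + δ) :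
    ∫⁻ q in Icc 0 h ×ˢ Icc 0 h,
        ENNReal.ofReal (posPow (s - q.1) α * posPow (s - q.2) β * w (q.1 - q.2)) ≤
      ENNReal.ofReal M *
        (ENNReal.ofReal (h ^ (α₁ + β + 1) / (α₁ + β + 1)) *
            ENNReal.ofReal (h ^ (α₂ + δ + 1) / (α₂ + δ + 1)) +
          ENNReal.ofReal (h ^ (β₁ + α + 1) / (β₁ + α + 1)) *
            ENNReal.ofReal (h ^ (β₂ + δ + 1) / (β₂ + δ + 1))) := by
  set P : ℝ → ℝ → ℝ≥0∞ := fun p t => ENNReal.ofReal (posPow t p)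
  have hP : ∀ p, Measurable (P p) := fun p => by fun_prop
  have hP0 : ∀ p, ∀ t ≤ 0, P p t = 0 := fun p t ht => by simp [P, posPow_of_nonpos ht]
  have hPint : ∀ p, -1 < p → ∫⁻ t in Ioc 0 h, P p t = ENNReal.ofReal (h ^ (p + 1) / (p + 1)) :=
    fun p hp => lintegral_Ioc_posPow hp hh
  have hM0 : 0 ≤ M := nonneg_of_le_mul_abs_rpow hw0 hwM
  have hae : ∀ᵐ q ∂(volume.restrict (Icc (0 : ℝ) h ×ˢ Icc 0 h)),
      ENNReal.ofReal (posPow (s - q.1) α * posPow (s - q.2) β * w (q.1 - q.2)) ≤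
        ENNReal.ofReal M * (P (α₁ + β) (s - q.2) * P (α₂ + δ) (q.2 - q.1) +
          P (β₁ + α) (s - q.1) * P (β₂ + δ) (q.1 - q.2)) := by
    refine ae_restrict_of_ae (ae_fst_ne_snd.mono fun q hq => ?_)
    refine (ENNReal.ofReal_le_ofReal
      (posPow_mul_posPow_mul_le_add_of_ne hw0 hwM hα hβ hα₁ hα₂ hβ₁ hβ₂ hq)).trans_eq ?_
    simp only [P, ENNReal.ofReal_mul, ENNReal.ofReal_add, hM0, posPow_nonneg, mul_nonneg]
  calc _ ≤ _ := lintegral_mono_ae hae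
    _ = ENNReal.ofReal M *
          ((∫⁻ q in Icc 0 h ×ˢ Icc 0 h, P (α₁ + β) (s - q.2) * P (α₂ + δ) (q.2 - q.1)) +
            ∫⁻ q in Icc 0 h ×ˢ Icc 0 h, P (β₁ + α) (s - q.1) * P (β₂ + δ) (q.1 - q.2)) := by
        rw [lintegral_const_mul' _ _ ENNReal.ofReal_ne_top, lintegral_add_left (by fun_prop)]
    _ ≤ _ := by
        rw [← hPint _ hα₁β, ← hPint _ hα₂δ, ← hPint _ hβ₁α, ← hPint _ hβ₂δ]
        gcongr
        · exact lintegral_square_swap_le (hP _) (hP _) (hP0 _) (hP0 _) hs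
        · exact lintegral_square_le (hP _) (hP _) (hP0 _) (hP0 _) hs

lemma lintegral_cube_integrand_le {h : ℝ} (hh : 0 ≤ h)
    (hα₁β : -1 < α₁ + β) (hα₂δ : -1 < α₂ + δ) (hβ₁α : -1 < β₁ + α) (hβ₂δ : -1 < β₂ + δ) :
    ∫⁻ p in Icc 0 h ×ˢ Icc 0 h ×ˢ Icc 0 h,
        ENNReal.ofReal (posPow (p.1 - p.2.1) α * posPow (p.1 - p.2.2) β * w (p.2.1 - p.2.2)) ≤
      ENNReal.ofReal (M * (1 / ((α₁ + β + 1) * (α₂ + δ + 1)) + 1 / ((β₁ + α + 1) * (β₂ + δ + 1))) *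
        h ^ (α + β + δ + 3)) := by
  refine (lintegral_cube_le fun s hs => lintegral_square_integrand_le hw0 hwM hα hβ hα₁ hα₂ hβ₁ hβ₂
    hs.2 hh hα₁β hα₂δ hβ₁α hβ₂δ).trans_eq ?_
  have hM0 : 0 ≤ M := nonneg_of_le_mul_abs_rpow hw0 hwM
  have hI : ∀ p, -1 < p → 0 ≤ h ^ (p + 1) / (p + 1) := fun p hp =>
    div_nonneg (Real.rpow_nonneg hh _) (by linarith)
  rw [← ENNReal.ofReal_mul (hI _ hα₁β), ← ENNReal.ofReal_mul (hI _ hβ₁α),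
    ← ENNReal.ofReal_add (mul_nonneg (hI _ hα₁β) (hI _ hα₂δ)) (mul_nonneg (hI _ hβ₁α) (hI _ hβ₂δ)),
    ← ENNReal.ofReal_mul hM0, ← ENNReal.ofReal_mul hh]
  congr 1
  have e₁ := mul_rpow_div_mul_rpow_div hh (by linarith : 0 < α₁ + β + 1)
    (by linarith : 0 < α₂ + δ + 1)
  have e₂ := mul_rpow_div_mul_rpow_div hh (by linarith : 0 < β₁ + α + 1)
    (by linarith : 0 < β₂ + δ + 1)
  rw [show α₁ + β + 1 + (α₂ + δ + 1) + 1 = α + β + δ + 3 by rw [← hα]; ring] at e₁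
  rw [show β₁ + α + 1 + (β₂ + δ + 1) + 1 = α + β + δ + 3 by rw [← hβ]; ring] at e₂
  linear_combination M * e₁ + M * e₂

end UpperBound

lemma integrableOn_and_setIntegral_le_of_lintegral_le {X : Type*} [MeasurableSpace X]
    {μ : Measure X} {s : Set X} {f : X → ℝ} {c : ℝ} (hf : AEStronglyMeasurable f (μ.restrict s))
    (hf0 : ∀ x, 0 ≤ f x) (hc : 0 ≤ c)
    (hfc : ∫⁻ x in s, ENNReal.ofReal (f x) ∂μ ≤ ENNReal.ofReal c) :
    IntegrableOn f s μ ∧ ∫ x in s, f x ∂μ ≤ c := by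
  refine ⟨⟨hf, ?_⟩, ?_⟩
  · rw [hasFiniteIntegral_iff_ofReal (ae_of_all _ hf0)]
    exact hfc.trans_lt ENNReal.ofReal_lt_top
  · rw [integral_eq_lintegral_of_nonneg_ae (ae_of_all _ hf0) hf]
    exact ENNReal.toReal_le_of_le_ofReal hc hfc

theorem exists_setIntegral_cube_le {w : ℝ → ℝ} {M δ α β : ℝ} (hw : Measurable w)
    (hw0 : ∀ t, 0 ≤ w t) (hwM : ∀ t ≠ 0, w t ≤ M * |t| ^ δ) (hα : α ∈ Ioo (-1) 0)
    (hβ : β ∈ Ioo (-1) 0) (hδ : -1 < δ) (hαβδ : -2 < α + β + δ) :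
    ∃ C, ∀ h, 0 ≤ h →
      IntegrableOn (fun p : ℝ × ℝ × ℝ => posPow (p.1 - p.2.1) α * posPow (p.1 - p.2.2) β *
        w (p.2.1 - p.2.2)) (Icc 0 h ×ˢ Icc 0 h ×ˢ Icc 0 h) ∧
      ∫ p in Icc 0 h ×ˢ Icc 0 h ×ˢ Icc 0 h,
        posPow (p.1 - p.2.1) α * posPow (p.1 - p.2.2) β * w (p.2.1 - p.2.2) ≤
          C * h ^ (α + β + δ + 3) := by
  obtain ⟨α₁, α₂, hα', hα₁, hα₂, hα₁β, hα₂δ⟩ := exists_nonpos_split hα.2 hβ.1 hδ (by linarith)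
  obtain ⟨β₁, β₂, hβ', hβ₁, hβ₂, hβ₁α, hβ₂δ⟩ := exists_nonpos_split hβ.2 hα.1 hδ (by linarith)
  have hM0 : 0 ≤ M := nonneg_of_le_mul_abs_rpow hw0 hwM
  refine ⟨_, fun h hh => integrableOn_and_setIntegral_le_of_lintegral_le (by fun_prop)
    (fun p => mul_nonneg (mul_nonneg (posPow_nonneg _ _) (posPow_nonneg _ _)) (hw0 _)) ?_
    (lintegral_cube_integrand_le hw0 hwM hα' hβ' hα₁ hα₂ hβ₁ hβ₂ hh hα₁β hα₂δ hβ₁α hβ₂δ)⟩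
  have hpos : ∀ a b : ℝ, -1 < a → -1 < b → 0 ≤ 1 / ((a + 1) * (b + 1)) := fun a b ha hb =>
    one_div_nonneg.2 (mul_nonneg (by linarith) (by linarith))
  exact mul_nonneg (mul_nonneg hM0 (add_nonneg (hpos _ _ hα₁β hα₂δ) (hpos _ _ hβ₁α hβ₂δ)))
    (Real.rpow_nonneg hh _)

theorem le_setIntegral_cube {w : ℝ → ℝ} {L T δ α β h : ℝ} (hw0 : ∀ t, 0 ≤ w t) (hL : 0 ≤ L)
    (hwL : ∀ t ≥ T, L * t ^ δ ≤ w t) (hδ : δ ≤ 0) (hα : α ≤ 0) (hβ : β ≤ 0) (hh : 0 < h)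
    (hTh : 8 * T ≤ h)
    (hint : IntegrableOn (fun p : ℝ × ℝ × ℝ => posPow (p.1 - p.2.1) α * posPow (p.1 - p.2.2) β *
      w (p.2.1 - p.2.2)) (Icc 0 h ×ˢ Icc 0 h ×ˢ Icc 0 h)) :
    L / 128 * h ^ (α + β + δ + 3) ≤
      ∫ p in Icc 0 h ×ˢ Icc 0 h ×ˢ Icc 0 h,
        posPow (p.1 - p.2.1) α * posPow (p.1 - p.2.2) β * w (p.2.1 - p.2.2) := by
  set S := Icc (3 * h / 4) h ×ˢ Icc (h / 4) (h / 2) ×ˢ Icc 0 (h / 8)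
  have hS : S ⊆ Icc 0 h ×ˢ Icc 0 h ×ˢ Icc 0 h :=
    prod_mono (Icc_subset_Icc (by linarith) le_rfl)
      (prod_mono (Icc_subset_Icc (by linarith) (by linarith)) (Icc_subset_Icc le_rfl (by linarith)))
  have hSvol : volume S = ENNReal.ofReal (h ^ (3 : ℝ) / 128) := by
    rw [Measure.volume_eq_prod, Measure.prod_prod, Measure.volume_eq_prod, Measure.prod_prod,
      Real.volume_Icc, Real.volume_Icc, Real.volume_Icc, ← ENNReal.ofReal_mul (by linarith),
      ← ENNReal.ofReal_mul (by linarith), Real.rpow_ofNat]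
    ring_nf
  have hbound : ∀ p ∈ S, L * h ^ (α + β + δ) ≤
      posPow (p.1 - p.2.1) α * posPow (p.1 - p.2.2) β * w (p.2.1 - p.2.2) := by
    rintro ⟨s, u, v⟩ ⟨⟨hs₁, hs₂⟩, ⟨hu₁, hu₂⟩, ⟨hv₁, hv₂⟩⟩
    have hsu : 0 < s - u := by linarith
    have hsv : 0 < s - v := by linarith
    have huv : 0 < u - v := by linarith
    dsimp only
    rw [posPow_of_pos hsu, posPow_of_pos hsv, Real.rpow_add hh, Real.rpow_add hh]
    calc L * (h ^ α * h ^ β * h ^ δ) = h ^ α * h ^ β * (L * h ^ δ) := by ring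
      _ ≤ (s - u) ^ α * (s - v) ^ β * (L * (u - v) ^ δ) := by
        gcongr ?_ * ?_ * (L * ?_)
        · exact Real.rpow_le_rpow_of_nonpos hsu (by linarith) hα
        · exact Real.rpow_le_rpow_of_nonpos hsv (by linarith) hβ
        · exact Real.rpow_le_rpow_of_nonpos huv (by linarith) hδ
      _ ≤ (s - u) ^ α * (s - v) ^ β * w (u - v) := by
        gcongr; exact hwL _ (by linarith)
  calc L / 128 * h ^ (α + β + δ + 3) = L * h ^ (α + β + δ) * (volume S).toReal := by
        rw [hSvol, ENNReal.toReal_ofReal (by positivity), Real.rpow_add hh]; ring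
    _ ≤ ∫ p in S, posPow (p.1 - p.2.1) α * posPow (p.1 - p.2.2) β * w (p.2.1 - p.2.2) :=
        setIntegral_ge_of_const_le_real (measurableSet_Icc.prod (measurableSet_Icc.prod
          measurableSet_Icc)) (by simp [hSvol]) hbound (hint.mono_set hS)
    _ ≤ _ := setIntegral_mono_set hint (ae_of_all _ fun p =>
        mul_nonneg (mul_nonneg (posPow_nonneg _ _) (posPow_nonneg _ _)) (hw0 _)) hS.eventuallyLE

lemma eventually_half_le_and_le_two_mul {ν g : ℝ → ℝ} {l : Filter ℝ} (hg : ∀ᶠ s in l, 0 < g s)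
    (hνg : Tendsto (fun s => ν s / g s) l (nhds 1)) :
    ∀ᶠ s in l, g s / 2 ≤ ν s ∧ ν s ≤ 2 * g s := by
  filter_upwards [hg, hνg (Ioo_mem_nhds (by norm_num : (1 : ℝ) / 2 < 1) one_lt_two)]
    with s hs hνs
  rw [mem_preimage, mem_Ioo, lt_div_iff₀ hs, div_lt_iff₀ hs] at hνs
  constructor <;> linarith

lemma exists_pow_le_and_le_of_tendsto_div_rpow {ν : ℝ → ℝ} {K γ : ℝ} (hK : 0 < K)
    (hν : ∀ s, 0 ≤ ν s) (hasym : Tendsto (fun s : ℝ => ν s / (K * s ^ γ)) atTop (nhds 1))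
    (n : ℕ) : ∃ T > 0, ∀ t ≥ T,
      (K / 2) ^ n * t ^ (γ * n) ≤ ν t ^ n ∧ ν t ^ n ≤ (2 * K) ^ n * t ^ (γ * n) := by
  have hpos : ∀ᶠ s : ℝ in atTop, 0 < s := eventually_gt_atTop 0
  obtain ⟨T, hT⟩ := eventually_atTop.1 (hpos.and (eventually_half_le_and_le_two_mul
    (hpos.mono fun s hs => mul_pos hK (Real.rpow_pos_of_pos hs γ)) hasym))
  refine ⟨T, (hT T le_rfl).1, fun t ht => ?_⟩
  obtain ⟨ht0, hlow, hup⟩ := hT t ht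
  rw [Real.rpow_mul_natCast ht0.le, ← mul_pow, ← mul_pow, div_mul_eq_mul_div, mul_assoc]
  exact ⟨pow_le_pow_left₀ (by positivity) hlow _, pow_le_pow_left₀ (hν t) hup _⟩

lemma exists_le_mul_abs_rpow {w : ℝ → ℝ} {A B T δ : ℝ} (heven : ∀ t, w (-t) = w t)
    (hT : 0 < T) (hδ : δ ≤ 0) (hB : ∀ t, w t ≤ B) (hB0 : 0 ≤ B) (hA : ∀ t ≥ T, w t ≤ A * t ^ δ) :
    ∃ M, ∀ t ≠ 0, w t ≤ M * |t| ^ δ := by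
  refine ⟨max A (B / T ^ δ), fun t ht => ?_⟩
  have habs : w t = w |t| := by rcases abs_choice t with h | h <;> simp only [h, heven]
  have ht' : 0 < |t| := abs_pos.2 ht
  rw [habs]
  rcases le_or_gt T |t| with hTt | hTt
  · exact (hA _ hTt).trans (by gcongr; exact le_max_left _ _)
  · calc w |t| ≤ B / T ^ δ * T ^ δ := by
          rw [div_mul_cancel₀ _ (Real.rpow_pos_of_pos hT δ).ne']; exact hB _
      _ ≤ max A (B / T ^ δ) * |t| ^ δ := by
        gcongr ?_ * ?_
        · exact le_max_right _ _
        · exact Real.rpow_le_rpow_of_nonpos ht' hTt.le hδ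

/-- Let `ν : ℝ → [0,∞)` be measurable, even, bounded by `C₀`, with
`ν s ∼ K s^γ` as `s → ∞` for `K > 0`, `γ ∈ (-1,0)`. For integer `m ≥ 1` and
`α, β ∈ (-1,0)` with `(m-1)γ > -1` and `α + β + (m-1)γ > -2`, the triple integral
`∫_{[0,h]³} (s-u)₊^α (s-v)₊^β ν(u-v)^(m-1)` is comparable (two-sided) to
`h^(α+β+(m-1)γ+3)` for all large `h`. -/
theorem stmt6 (ν : ℝ → ℝ) (C₀ K γ : ℝ) (m : ℕ) (α β : ℝ)
    (hmeas : Measurable ν) (hnn : ∀ s, 0 ≤ ν s) (hbd : ∀ s, ν s ≤ C₀)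
    (heven : ∀ s, ν (-s) = ν s)
    (hK : 0 < K) (hγ : γ ∈ Ioo (-1 : ℝ) 0)
    (hasym : Tendsto (fun s : ℝ => ν s / (K * s ^ γ)) atTop (nhds 1))
    (hm : 1 ≤ m)
    (hα : α ∈ Ioo (-1 : ℝ) 0) (hβ : β ∈ Ioo (-1 : ℝ) 0)
    (h1 : ((m : ℝ) - 1) * γ > -1) (h2 : α + β + ((m : ℝ) - 1) * γ > -2) :
    ∃ c C h₀ : ℝ, 0 < c ∧ c ≤ C ∧ 0 < h₀ ∧ ∀ h ≥ h₀,
      c * h ^ (α + β + ((m : ℝ) - 1) * γ + 3) ≤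
        (∫ p in (Icc (0 : ℝ) h) ×ˢ (Icc (0 : ℝ) h) ×ˢ (Icc (0 : ℝ) h),
          posPow (p.1 - p.2.1) α * posPow (p.1 - p.2.2) β * ν (p.2.1 - p.2.2) ^ (m - 1)) ∧
      (∫ p in (Icc (0 : ℝ) h) ×ˢ (Icc (0 : ℝ) h) ×ˢ (Icc (0 : ℝ) h),
          posPow (p.1 - p.2.1) α * posPow (p.1 - p.2.2) β * ν (p.2.1 - p.2.2) ^ (m - 1)) ≤
        C * h ^ (α + β + ((m : ℝ) - 1) * γ + 3) := by
  set δ := ((m : ℝ) - 1) * γ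
  have hδ0 : δ ≤ 0 := mul_nonpos_of_nonneg_of_nonpos (by simp [hm]) hγ.2.le
  obtain ⟨T, hT0, hT⟩ := exists_pow_le_and_le_of_tendsto_div_rpow hK hnn hasym (m - 1)
  rw [Nat.cast_sub hm, Nat.cast_one, mul_comm γ] at hT
  obtain ⟨M, hM⟩ := exists_le_mul_abs_rpow (w := fun t => ν t ^ (m - 1))
    (fun t => by simp only [heven]) hT0 hδ0 (fun t => pow_le_pow_left₀ (hnn t) (hbd t) _)
    (pow_nonneg ((hnn 0).trans (hbd 0)) _) fun t ht => (hT t ht).2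
  obtain ⟨C, hC⟩ := exists_setIntegral_cube_le (hmeas.pow_const _) (fun t => pow_nonneg (hnn t) _)
    hM hα hβ h1 (by linarith)
  refine ⟨(K / 2) ^ (m - 1) / 128, max C ((K / 2) ^ (m - 1) / 128), 8 * T, by positivity,
    le_max_right _ _, by positivity, fun h hh => ?_⟩
  have hh0 : 0 < h := by linarith
  obtain ⟨hint, hle⟩ := hC h hh0.le
  refine ⟨le_setIntegral_cube (fun t => pow_nonneg (hnn t) _) (by positivity)
    (fun t ht => (hT t ht).1) hδ0 hα.2.le hβ.2.le hh0 hh hint, hle.trans ?_⟩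
  gcongr
  exact le_max_left _ _
end

section
/- Let 1/2 < H < 1 and let u, v ∈ ℝ with u ≠ v. Then ∫_{-∞}^{min(u,v)} (u-x)^{H-3/2}·(v-x)^{H-3/2} dx = B(H-1/2, 2-2H) · |u-v|^{2H-2}. -/
/-!
With `p = H - 3/2` and `u < v`, the substitution `t = u - x` turns the integral into
`∫₀^∞ t^p (t + c)^p dt` with `c = v - u`, and the scaling `t = c s` pulls out `c^(2p+1) = c^(2H-2)`.
What remains is `∫₀^∞ s^(a-1) (1 + s)^(-(a+b)) ds = B(a, b)` with `a = H - 1/2`, `b = 2 - 2H`,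
which is the integral over `(0, 1)` defining `B` after the substitution `s = x / (1 - x)`.
-/

open MeasureTheory Set

/-- The Euler Beta function `B(a,b) = Γ(a)Γ(b)/Γ(a+b)`. -/
noncomputable def eulerBeta (a b : ℝ) : ℝ := Real.Gamma a * Real.Gamma b / Real.Gamma (a + b)

open Real

lemma integral_Iio_comp_sub_left {E : Type*} [NormedAddCommGroup E] [NormedSpace ℝ E]
    (f : ℝ → E) (u : ℝ) : ∫ x in Iio u, f (u - x) = ∫ t in Ioi 0, f t := by
  have hpre : (u - ·) ⁻¹' Ioi 0 = Iio u := by ext x; simp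
  rw [← hpre, (Measure.measurePreserving_sub_left volume u).setIntegral_preimage_emb
    (Homeomorph.subLeft u).measurableEmbedding]

lemma integral_Ioi_rpow_mul_add_rpow {c : ℝ} (hc : 0 < c) (p q : ℝ) :
    ∫ t in Ioi 0, t ^ p * (t + c) ^ q
      = c ^ (p + q + 1) * ∫ s in Ioi 0, s ^ p * (1 + s) ^ q := by
  have hscale : ∀ s ∈ Ioi (0 : ℝ),
      (c * s) ^ p * (c * s + c) ^ q = c ^ (p + q) * (s ^ p * (1 + s) ^ q) := by
    intro s hs
    rw [show c * s + c = c * (1 + s) by ring, mul_rpow hc.le (le_of_lt hs),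
      mul_rpow hc.le (by linarith [mem_Ioi.mp hs]), rpow_add hc]
    ring
  have hsub := integral_comp_mul_left_Ioi' (fun t ↦ t ^ p * (t + c) ^ q) 0 hc
  rw [mul_zero] at hsub
  rw [← hsub, setIntegral_congr_fun measurableSet_Ioi hscale, integral_const_mul, smul_eq_mul,
    rpow_add_one hc.ne']
  ring

lemma eulerBeta_eq_integral_Ioo {a b : ℝ} (ha : 0 < a) (hb : 0 < b) :
    eulerBeta a b = ∫ x in Ioo 0 1, x ^ (a - 1) * (1 - x) ^ (b - 1) := by
  have hcomplex : Complex.betaIntegral a b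
      = ↑(∫ x in Ioo (0 : ℝ) 1, x ^ (a - 1) * (1 - x) ^ (b - 1)) := by
    rw [Complex.betaIntegral, intervalIntegral.integral_of_le zero_le_one,
      integral_Ioc_eq_integral_Ioo, ← integral_complex_ofReal]
    refine setIntegral_congr_fun measurableSet_Ioo fun x hx ↦ ?_
    push_cast
    rw [Complex.ofReal_cpow hx.1.le, Complex.ofReal_cpow (by linarith [hx.2])]
    push_cast
    ring_nf
  exact (ProbabilityTheory.beta_eq_betaIntegralReal a b ha hb).trans
    (by rw [hcomplex, Complex.ofReal_re])

lemma image_div_one_sub_Ioo : (fun x : ℝ ↦ x / (1 - x)) '' Ioo 0 1 = Ioi 0 := by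
  ext y
  constructor
  · rintro ⟨x, ⟨hx0, hx1⟩, rfl⟩
    exact div_pos hx0 (sub_pos.2 hx1)
  · intro hy
    have hy : 0 < y := hy
    refine ⟨y / (1 + y), ⟨by positivity, (div_lt_one (by positivity)).2 (by linarith)⟩, ?_⟩
    field_simp
    ring

lemma integral_Ioi_rpow_mul_one_add_rpow_eq_eulerBeta {a b : ℝ} (ha : 0 < a) (hb : 0 < b) :
    ∫ s in Ioi 0, s ^ (a - 1) * (1 + s) ^ (-(a + b)) = eulerBeta a b := by
  have hderiv : ∀ x ∈ Ioo (0 : ℝ) 1,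
      HasDerivWithinAt (fun x ↦ x / (1 - x)) (((1 - x) ^ 2)⁻¹) (Ioo 0 1) x := by
    intro x hx
    have h := (hasDerivAt_id x).div ((hasDerivAt_id x).const_sub 1) (sub_pos.2 hx.2).ne'
    exact (h.congr_deriv (by simp only [id]; ring)).hasDerivWithinAt
  have hinj : InjOn (fun x : ℝ ↦ x / (1 - x)) (Ioo 0 1) := by
    intro x hx y hy hxy
    have hx1 := (sub_pos.2 hx.2).ne'
    have hy1 := (sub_pos.2 hy.2).ne'
    field_simp at hxy
    linarith
  rw [eulerBeta_eq_integral_Ioo ha hb, ← image_div_one_sub_Ioo,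
    integral_image_eq_integral_abs_deriv_smul measurableSet_Ioo hderiv hinj]
  refine setIntegral_congr_fun measurableSet_Ioo fun x ⟨hx0, hx1⟩ ↦ ?_
  have hx1 : 0 < 1 - x := sub_pos.2 hx1
  have hsplit : (1 - x) ^ (a + b) = (1 - x) ^ (a - 1) * (1 - x) ^ (b - 1) * (1 - x) ^ 2 := by
    rw [show a + b = (a - 1) + (b - 1) + 2 by ring, rpow_add hx1, rpow_add hx1, rpow_two]
  rw [show 1 + x / (1 - x) = (1 - x)⁻¹ by field_simp; ring, inv_rpow hx1.le, rpow_neg hx1.le,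
    inv_inv, div_rpow hx0.le hx1.le, hsplit, abs_of_pos (by positivity), smul_eq_mul]
  have : (1 - x) ^ (a - 1) ≠ 0 := (rpow_pos_of_pos hx1 _).ne'
  field_simp

/-- For `1/2 < H < 1` and `u ≠ v`,
`∫_{-∞}^{min u v} (u-x)^(H-3/2) (v-x)^(H-3/2) dx = B(H-1/2, 2-2H) |u-v|^(2H-2)`. -/
theorem stmt7 (H u v : ℝ) (hH : H ∈ Ioo (1 / 2 : ℝ) 1) (huv : u ≠ v) :
    (∫ x in Iio (min u v), (u - x) ^ (H - 3 / 2) * (v - x) ^ (H - 3 / 2))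
      = eulerBeta (H - 1 / 2) (2 - 2 * H) * |u - v| ^ (2 * H - 2) := by
  wlog hlt : u < v generalizing u v
  · have h := this v u huv.symm (lt_of_le_of_ne (not_lt.1 hlt) huv.symm)
    rw [min_comm, abs_sub_comm] at h
    simpa only [mul_comm] using h
  have hc : 0 < v - u := sub_pos.2 hlt
  have hbeta := integral_Ioi_rpow_mul_one_add_rpow_eq_eulerBeta
    (a := H - 1 / 2) (b := 2 - 2 * H) (by linarith [hH.1]) (by linarith [hH.2])
  rw [show H - 1 / 2 - 1 = H - 3 / 2 by ring,
    show -(H - 1 / 2 + (2 - 2 * H)) = H - 3 / 2 by ring] at hbeta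
  calc ∫ x in Iio (min u v), (u - x) ^ (H - 3 / 2) * (v - x) ^ (H - 3 / 2)
      = ∫ t in Ioi 0, t ^ (H - 3 / 2) * (t + (v - u)) ^ (H - 3 / 2) := by
        rw [min_eq_left hlt.le, ← integral_Iio_comp_sub_left _ u]
        simp only [sub_add_sub_cancel']
    _ = (v - u) ^ (2 * H - 2) * eulerBeta (H - 1 / 2) (2 - 2 * H) := by
        rw [integral_Ioi_rpow_mul_add_rpow hc, hbeta,
          show H - 3 / 2 + (H - 3 / 2) + 1 = 2 * H - 2 by ring]
    _ = eulerBeta (H - 1 / 2) (2 - 2 * H) * |u - v| ^ (2 * H - 2) := by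
        rw [abs_sub_comm, abs_of_pos hc, mul_comm]
end

section
/- Let 1/2 < H < 1 and let u, v ∈ ℝ with u ≠ v and max(u,v) < 1. Then ∫_{max(u,v)}^{1} (s-u)^{H-3/2}·(s-v)^{H-3/2} ds < B(H-1/2, 2-2H) · |u-v|^{2H-2}. -/
/-!
With `d = v - u`, the substitution `s = v + d t` turns the integral into
`d ^ (2H - 2) ∫₀ᵀ t ^ (a - 1) (1 + t) ^ (-(a + b)) dt` with `a = H - 1/2`, `b = 2 - 2H`,
`T = (1 - v) / d`, and `x = t / (1 + t)` turns the latter into the incomplete Beta integral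
`∫₀^{T/(1+T)} x ^ (a - 1) (1 - x) ^ (b - 1) dx`. It falls short of `B(a, b)` by the integral of
a positive function over `(T/(1+T), 1)`.
-/

open MeasureTheory Set

theorem eulerBeta_eq_integral {a b : ℝ} (ha : 0 < a) (hb : 0 < b) :
    eulerBeta a b = ∫ x in (0 : ℝ)..1, x ^ (a - 1) * (1 - x) ^ (b - 1) := by
  set R : ℝ := ∫ x in (0 : ℝ)..1, x ^ (a - 1) * (1 - x) ^ (b - 1)
  have hR : Complex.betaIntegral a b = R := by
    rw [← intervalIntegral.integral_ofReal, Complex.betaIntegral]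
    refine intervalIntegral.integral_congr fun x hx ↦ ?_
    rw [uIcc_of_le zero_le_one] at hx
    rw [Complex.ofReal_mul, Complex.ofReal_cpow hx.1, Complex.ofReal_cpow (by linarith [hx.2])]
    push_cast
    ring
  have h := Complex.Gamma_mul_Gamma_eq_betaIntegral (s := (a : ℂ)) (t := (b : ℂ))
    (by simpa using ha) (by simpa using hb)
  rw [hR, ← Complex.ofReal_add, Complex.Gamma_ofReal, Complex.Gamma_ofReal,
    Complex.Gamma_ofReal, ← Complex.ofReal_mul, ← Complex.ofReal_mul] at h
  have hΓ : Real.Gamma a * Real.Gamma b = Real.Gamma (a + b) * R := by exact_mod_cast h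
  rw [eulerBeta, hΓ, mul_div_cancel_left₀ _ (Real.Gamma_pos_of_pos (add_pos ha hb)).ne']

theorem integral_rpow_mul_one_sub_rpow_lt_eulerBeta {a b c : ℝ} (ha : 0 < a) (hb : 0 < b)
    (hc0 : 0 < c) (hc1 : c < 1) :
    ∫ x in (0 : ℝ)..c, x ^ (a - 1) * (1 - x) ^ (b - 1) < eulerBeta a b := by
  set g : ℝ → ℝ := fun x ↦ x ^ (a - 1) * (1 - x) ^ (b - 1)
  have hg₁ : IntervalIntegrable g volume 0 c := by
    refine (intervalIntegral.intervalIntegrable_rpow' (by linarith)).mul_continuousOn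
      (ContinuousOn.rpow_const (continuousOn_const.sub continuousOn_id) fun x hx ↦ ?_)
    rw [uIcc_of_le hc0.le] at hx
    exact Or.inl (sub_pos.2 (hx.2.trans_lt hc1)).ne'
  have hg₂ : IntervalIntegrable g volume c 1 := by
    have h := (intervalIntegral.intervalIntegrable_rpow' (r := b - 1) (a := 0) (b := 1 - c)
      (by linarith)).comp_sub_left 1
    rw [sub_zero, sub_sub_cancel] at h
    refine h.symm.continuousOn_mul (ContinuousOn.rpow_const continuousOn_id fun x hx ↦ ?_)
    rw [uIcc_of_le hc1.le] at hx
    exact Or.inl (hc0.trans_le hx.1).ne'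
  have hpos : 0 < ∫ x in c..1, g x :=
    intervalIntegral.intervalIntegral_pos_of_pos_on hg₂
      (fun x hx ↦ mul_pos (Real.rpow_pos_of_pos (hc0.trans hx.1) _)
        (Real.rpow_pos_of_pos (sub_pos.2 hx.2) _)) hc1
  rw [eulerBeta_eq_integral ha hb, ← intervalIntegral.integral_add_adjacent_intervals hg₁ hg₂]
  linarith

theorem integral_rpow_mul_one_add_rpow_eq_integral_rpow_mul_one_sub_rpow
    (a b : ℝ) {T : ℝ} (hT : 0 ≤ T) :
    ∫ t in (0 : ℝ)..T, t ^ (a - 1) * (1 + t) ^ (-(a + b))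
      = ∫ x in (0 : ℝ)..T / (1 + T), x ^ (a - 1) * (1 - x) ^ (b - 1) := by
  have hderiv : ∀ t ∈ Ioo 0 T, HasDerivAt (fun t : ℝ ↦ t / (1 + t)) ((1 + t) ^ (-2 : ℝ)) t := by
    intro t ht
    have h1t : 0 < 1 + t := by linarith [ht.1]
    refine ((hasDerivAt_id' t).div ((hasDerivAt_id' t).const_add 1) h1t.ne').congr_deriv ?_
    rw [Real.rpow_neg h1t.le, Real.rpow_two]
    field_simp
    ring
  have hcont : ContinuousOn (fun t : ℝ ↦ t / (1 + t)) (Icc 0 T) :=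
    continuousOn_id.div (continuousOn_const.add continuousOn_id)
      fun t ht ↦ (by linarith [ht.1] : (0 : ℝ) < 1 + t).ne'
  have hsubst := integral_Icc_deriv_smul_of_deriv_nonneg
    (g := fun x : ℝ ↦ x ^ (a - 1) * (1 - x) ^ (b - 1)) hcont hderiv
    (fun t ht ↦ Real.rpow_nonneg (by linarith [ht.1]) _) hT
  simp only [zero_div, smul_eq_mul] at hsubst
  rw [intervalIntegral.integral_of_le hT, intervalIntegral.integral_of_le (by positivity),
    ← integral_Icc_eq_integral_Ioc, ← integral_Icc_eq_integral_Ioc, ← hsubst,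
    integral_Icc_eq_integral_Ioo, integral_Icc_eq_integral_Ioo]
  refine setIntegral_congr_fun measurableSet_Ioo fun t ht ↦ ?_
  have h1t : 0 < 1 + t := by linarith [ht.1]
  have hsub : 1 - t / (1 + t) = (1 + t)⁻¹ := by field_simp; ring
  rw [hsub, Real.div_rpow ht.1.le h1t.le, Real.inv_rpow h1t.le, ← Real.rpow_neg h1t.le,
    div_eq_mul_inv, ← Real.rpow_neg h1t.le]
  calc t ^ (a - 1) * (1 + t) ^ (-(a + b))
      = t ^ (a - 1) * ((1 + t) ^ (-2 : ℝ) * (1 + t) ^ (-(a - 1)) * (1 + t) ^ (-(b - 1))) := by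
        rw [← Real.rpow_add h1t, ← Real.rpow_add h1t]; ring_nf
    _ = _ := by ring

theorem integral_sub_rpow_mul_sub_rpow (p q : ℝ) {u v w : ℝ} (huv : u < v) (hvw : v ≤ w) :
    ∫ s in v..w, (s - u) ^ q * (s - v) ^ p
      = (v - u) ^ (p + q + 1) * ∫ t in (0 : ℝ)..(w - v) / (v - u), t ^ p * (1 + t) ^ q := by
  set d := v - u
  have hd : 0 < d := sub_pos.2 huv
  have hT : 0 ≤ (w - v) / d := div_nonneg (sub_nonneg.2 hvw) hd.le
  calc ∫ s in v..w, (s - u) ^ q * (s - v) ^ p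
      = d • ∫ t in (0 : ℝ)..(w - v) / d, (v + d * t - u) ^ q * (v + d * t - v) ^ p := by
        have h := intervalIntegral.smul_integral_comp_add_mul
          (fun s ↦ (s - u) ^ q * (s - v) ^ p) d v (a := 0) (b := (w - v) / d)
        rw [h, mul_zero, add_zero, mul_div_cancel₀ _ hd.ne', add_sub_cancel]
    _ = d * ∫ t in (0 : ℝ)..(w - v) / d, d ^ (p + q) * (t ^ p * (1 + t) ^ q) := by
        rw [smul_eq_mul]
        congr 1
        refine intervalIntegral.integral_congr fun t ht ↦ ?_
        rw [uIcc_of_le hT] at ht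
        have h1t : 0 ≤ 1 + t := by linarith [ht.1]
        rw [show v + d * t - u = d * (1 + t) by ring, show v + d * t - v = d * t by ring,
          Real.mul_rpow hd.le h1t, Real.mul_rpow hd.le ht.1, Real.rpow_add hd]
        ring
    _ = d ^ (p + q + 1) * ∫ t in (0 : ℝ)..(w - v) / d, t ^ p * (1 + t) ^ q := by
        rw [intervalIntegral.integral_const_mul, Real.rpow_add hd (p + q) 1, Real.rpow_one]
        ring

/-- For `1/2 < H < 1`, `u ≠ v`, `max u v < 1`,
`∫_{max u v}^1 (s-u)^(H-3/2) (s-v)^(H-3/2) ds < B(H-1/2, 2-2H) |u-v|^(2H-2)`. -/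
theorem stmt8 (H u v : ℝ) (hH : H ∈ Ioo (1 / 2 : ℝ) 1) (huv : u ≠ v)
    (h1 : max u v < 1) :
    (∫ s in (max u v)..1, (s - u) ^ (H - 3 / 2) * (s - v) ^ (H - 3 / 2))
      < eulerBeta (H - 1 / 2) (2 - 2 * H) * |u - v| ^ (2 * H - 2) := by
  wlog hlt : u < v generalizing u v
  · have h := this v u huv.symm (by rwa [max_comm]) (huv.lt_or_gt.resolve_left hlt)
    simpa only [max_comm, abs_sub_comm, mul_comm] using h
  obtain ⟨hH₁, hH₂⟩ := hH
  rw [max_eq_right hlt.le] at h1 ⊢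
  rw [abs_sub_comm, abs_of_pos (sub_pos.2 hlt)]
  have hT : 0 < (1 - v) / (v - u) := div_pos (sub_pos.2 h1) (sub_pos.2 hlt)
  have hp : H - 3 / 2 = (H - 1 / 2) - 1 := by ring
  have hq : H - 3 / 2 = -((H - 1 / 2) + (2 - 2 * H)) := by ring
  calc ∫ s in v..1, (s - u) ^ (H - 3 / 2) * (s - v) ^ (H - 3 / 2)
      = (v - u) ^ (2 * H - 2) * ∫ t in (0 : ℝ)..(1 - v) / (v - u),
          t ^ ((H - 1 / 2) - 1) * (1 + t) ^ (-((H - 1 / 2) + (2 - 2 * H))) := by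
        rw [integral_sub_rpow_mul_sub_rpow _ _ hlt h1.le, ← hp, ← hq,
          show H - 3 / 2 + (H - 3 / 2) + 1 = 2 * H - 2 by ring]
    _ = (v - u) ^ (2 * H - 2) * ∫ x in (0 : ℝ)..(1 - v) / (v - u) / (1 + (1 - v) / (v - u)),
          x ^ ((H - 1 / 2) - 1) * (1 - x) ^ ((2 - 2 * H) - 1) := by
        rw [integral_rpow_mul_one_add_rpow_eq_integral_rpow_mul_one_sub_rpow _ _ hT.le]
    _ < eulerBeta (H - 1 / 2) (2 - 2 * H) * (v - u) ^ (2 * H - 2) := by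
        rw [mul_comm]
        gcongr
        exact integral_rpow_mul_one_sub_rpow_lt_eulerBeta (by linarith) (by linarith)
            (by positivity) ((div_lt_one (by linarith)).2 (by linarith))
end

section
/- Let m > 2 be an integer and let H ∈ (3/4, 1 - 1/(2m)). Define H*(m) = (H-1)m + 1, let r_I be the least integer r with 0 ≤ r ≤ m and r(2H-2) < -1, and let r_S be the least integer r with ⌊m/2⌋ ≤ r ≤ m and 2(m-r)(2H-2) > -1 (both exist under these hypotheses, since r = m satisfies both defining conditions). If H*(m) > 1/4, then r_I ≥ r_S. -/
/-- For an integer `m > 2` and `H ∈ (3/4, 1 - 1/(2m))`, with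
`r_I = min { r ≤ m : r(2H-2) < -1 }` and
`r_S = min { ⌊m/2⌋ ≤ r ≤ m : 2(m-r)(2H-2) > -1 }`:
if `H*(m) = (H-1)m + 1 > 1/4` then `r_I ≥ r_S`. -/
theorem stmt12 (m : ℕ) (H : ℝ) (hm : 2 < m)
    (hH1 : 3 / 4 < H) (hH2 : H < 1 - 1 / (2 * (m : ℝ)))
    (hHstar : (H - 1) * m + 1 > 1 / 4) :
    sInf {r : ℕ | m / 2 ≤ r ∧ r ≤ m ∧ 2 * ((m : ℝ) - r) * (2 * H - 2) > -1}
      ≤ sInf {r : ℕ | r ≤ m ∧ (r : ℝ) * (2 * H - 2) < -1} := by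
  have hm0 : (0:ℝ) < m := by positivity
  -- m is in the second set
  have h1 : 1 / (2 * (m : ℝ)) < 1 - H := by linarith
  have h2 : (1:ℝ) < (1 - H) * (2 * m) := (div_lt_iff₀ (by positivity)).mp h1
  have hmI : (m : ℝ) * (2 * H - 2) < -1 := by nlinarith
  have hne : {r : ℕ | r ≤ m ∧ (r : ℝ) * (2 * H - 2) < -1}.Nonempty :=
    ⟨m, le_refl m, hmI⟩
  set n := sInf {r : ℕ | r ≤ m ∧ (r : ℝ) * (2 * H - 2) < -1} with hn
  obtain ⟨hn1, hn2⟩ := Nat.sInf_mem hne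
  -- m*(2H-2) > -3/2 from hHstar
  have hmt : (m : ℝ) * (2 * H - 2) > -3/2 := by nlinarith
  have ht : 2 * H - 2 < 0 := by
    have : (1:ℝ)/(2*(m:ℝ)) > 0 := by positivity
    linarith
  apply Nat.sInf_le
  refine ⟨?_, hn1, ?_⟩
  · -- m / 2 ≤ n
    have h3 : (m : ℝ) < 2 * n := by nlinarith
    have h4 : m ≤ 2 * n := by exact_mod_cast h3.le
    calc m / 2 ≤ 2 * n / 2 := Nat.div_le_div_right h4
      _ = n := by omega
  · -- 2 * (m - n) * (2H-2) > -1
    nlinarith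
end

section
/- Let H ∈ (1/2, 1) and define g : [0,∞) → ℝ by g(z) = e^{-z} · ∫_0^z e^v · v^{H-3/2} dv. Then s^{3/2-H} · g(s) → 1 as s → ∞. -/
/-!
For `-1 < a ≤ 0` split `∫₀ˢ eᵛ vᵃ dv` at `c = s - t`. On `[c, s]` the weight `vᵃ` lies between
`sᵃ` and `cᵃ`, so this piece is `(eˢ - eᶜ)` times a number between `sᵃ` and `cᵃ`; the piece over
`[0, c]` is at most `eᶜ c^(a+1)/(a+1)`. After multiplying by `s⁻ᵃ e⁻ˢ` this traps the quantity
between `1 - e⁻ᵗ` and `e⁻ᵗ s/(a+1) + ((s-t)/s)ᵃ`, and the choice `t = √s` sends both bounds to `1`.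
-/

open Filter Set Real intervalIntegral

section ExpMulRpow

variable {a : ℝ}

lemma intervalIntegrable_exp_mul_rpow (ha : -1 < a) (c d : ℝ) :
    IntervalIntegrable (fun v => exp v * v ^ a) MeasureTheory.volume c d :=
  (intervalIntegrable_rpow' ha).continuousOn_mul continuous_exp.continuousOn

lemma intervalIntegrable_exp_mul_rpow_of_pos {c d : ℝ} (hc : 0 < c) (hd : 0 < d) :
    IntervalIntegrable (fun v => exp v * v ^ a) MeasureTheory.volume c d := by
  refine ContinuousOn.intervalIntegrable fun v hv => ?_
  have hv0 : v ≠ 0 := (lt_min hc hd |>.trans_le hv.1).ne'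
  exact (continuous_exp.continuousAt.mul
    (continuousAt_rpow_const v a (Or.inl hv0))).continuousWithinAt

lemma integral_exp_mul_rpow_le (ha : -1 < a) {c : ℝ} (hc : 0 ≤ c) :
    ∫ v in (0 : ℝ)..c, exp v * v ^ a ≤ exp c * (c ^ (a + 1) / (a + 1)) :=
  calc ∫ v in (0 : ℝ)..c, exp v * v ^ a
      ≤ ∫ v in (0 : ℝ)..c, exp c * v ^ a :=
        integral_mono_on hc (intervalIntegrable_exp_mul_rpow ha 0 c)
          ((intervalIntegrable_rpow' ha).const_mul _) fun v hv =>
            mul_le_mul_of_nonneg_right (exp_le_exp.2 hv.2) (rpow_nonneg hv.1 a)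
    _ = exp c * (c ^ (a + 1) / (a + 1)) := by
        rw [integral_const_mul, integral_rpow (Or.inl ha), zero_rpow (by linarith), sub_zero]

lemma mul_rpow_le_integral_exp_mul_rpow (ha : a ≤ 0) {c s : ℝ} (hc : 0 < c) (hcs : c ≤ s) :
    (exp s - exp c) * s ^ a ≤ ∫ v in c..s, exp v * v ^ a := by
  rw [← integral_exp, ← integral_mul_const]
  exact integral_mono_on hcs (intervalIntegrable_exp.mul_const _)
    (intervalIntegrable_exp_mul_rpow_of_pos hc (hc.trans_le hcs)) fun v hv =>
      mul_le_mul_of_nonneg_left (rpow_le_rpow_of_nonpos (hc.trans_le hv.1) hv.2 ha)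
        (exp_pos v).le

lemma integral_exp_mul_rpow_le_mul_rpow (ha : a ≤ 0) {c s : ℝ} (hc : 0 < c) (hcs : c ≤ s) :
    ∫ v in c..s, exp v * v ^ a ≤ (exp s - exp c) * c ^ a := by
  rw [← integral_exp, ← integral_mul_const]
  exact integral_mono_on hcs (intervalIntegrable_exp_mul_rpow_of_pos hc (hc.trans_le hcs))
    (intervalIntegrable_exp.mul_const _) fun v hv =>
      mul_le_mul_of_nonneg_left (rpow_le_rpow_of_nonpos hc hv.1 ha) (exp_pos v).le

lemma one_sub_exp_neg_le_rpow_neg_mul_exp_neg_mul_integral (ha₁ : -1 < a) (ha₀ : a ≤ 0) {s t : ℝ}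
    (ht : 0 ≤ t) (hts : t < s) :
    1 - exp (-t) ≤ s ^ (-a) * (exp (-s) * ∫ v in (0 : ℝ)..s, exp v * v ^ a) := by
  set c := s - t
  have hc : 0 < c := by linarith
  have hcs : c ≤ s := by linarith
  have hs : 0 < s := hc.trans_le hcs
  have h_head : 0 ≤ ∫ v in (0 : ℝ)..c, exp v * v ^ a :=
    integral_nonneg hc.le fun v hv => mul_nonneg (exp_pos v).le (rpow_nonneg hv.1 a)
  have h_tail := mul_rpow_le_integral_exp_mul_rpow ha₀ hc hcs
  have h_split := integral_add_adjacent_intervals (intervalIntegrable_exp_mul_rpow ha₁ 0 c)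
    (intervalIntegrable_exp_mul_rpow ha₁ c s)
  have h_norm : s ^ (-a) * (exp (-s) * ((exp s - exp c) * s ^ a)) = 1 - exp (-t) := by
    rw [rpow_neg hs.le, exp_neg, exp_neg, show c = s - t from rfl, exp_sub]
    field_simp [(rpow_pos_of_pos hs a).ne']
  rw [← h_norm, ← h_split]
  gcongr
  linarith

lemma rpow_neg_mul_exp_neg_mul_integral_le (ha₁ : -1 < a) (ha₀ : a ≤ 0) {s t : ℝ}
    (ht : 0 ≤ t) (hts : t < s) :
    s ^ (-a) * (exp (-s) * ∫ v in (0 : ℝ)..s, exp v * v ^ a)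
      ≤ exp (-t) * s / (a + 1) + ((s - t) / s) ^ a := by
  set c := s - t
  have hc : 0 < c := by linarith
  have hcs : c ≤ s := by linarith
  have hs : 0 < s := hc.trans_le hcs
  have h_head := integral_exp_mul_rpow_le ha₁ hc.le
  have h_tail := integral_exp_mul_rpow_le_mul_rpow ha₀ hc hcs
  have h_split := integral_add_adjacent_intervals (intervalIntegrable_exp_mul_rpow ha₁ 0 c)
    (intervalIntegrable_exp_mul_rpow ha₁ c s)
  have h_pow : c ^ (a + 1) ≤ s ^ (a + 1) := rpow_le_rpow hc.le hcs (by linarith)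
  calc s ^ (-a) * (exp (-s) * ∫ v in (0 : ℝ)..s, exp v * v ^ a)
      ≤ s ^ (-a) * (exp (-s) * (exp c * (s ^ (a + 1) / (a + 1)) + exp s * c ^ a)) := by
        rw [← h_split]
        gcongr
        · exact h_head.trans (by gcongr; linarith)
        · exact h_tail.trans (mul_le_mul_of_nonneg_right (by linarith [exp_pos c])
            (rpow_nonneg hc.le a))
    _ = exp (-t) * s / (a + 1) + ((s - t) / s) ^ a := by
        rw [div_rpow hc.le hs.le, rpow_add hs, rpow_one, rpow_neg hs.le, exp_neg, exp_neg,
          show c = s - t from rfl, exp_sub]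
        field_simp [(rpow_pos_of_pos hs a).ne']

theorem tendsto_rpow_neg_mul_exp_neg_mul_integral_exp_mul_rpow (ha₁ : -1 < a) (ha₀ : a ≤ 0) :
    Tendsto (fun s => s ^ (-a) * (exp (-s) * ∫ v in (0 : ℝ)..s, exp v * v ^ a))
      atTop (nhds 1) := by
  have h_sqrt : Tendsto sqrt atTop atTop := tendsto_sqrt_atTop
  have h_exp : Tendsto (fun s => exp (-√s)) atTop (nhds 0) :=
    tendsto_exp_neg_atTop_nhds_zero.comp h_sqrt
  have h_exp_mul : Tendsto (fun s => exp (-√s) * s / (a + 1)) atTop (nhds 0) := by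
    have h := ((tendsto_pow_mul_exp_neg_atTop_nhds_zero 2).comp h_sqrt).div_const (a + 1)
    rw [zero_div] at h
    refine h.congr' ?_
    filter_upwards [eventually_ge_atTop 0] with s hs
    simp [sq_sqrt hs, mul_comm]
  have h_ratio : Tendsto (fun s => ((s - √s) / s) ^ a) atTop (nhds 1) := by
    have h : Tendsto (fun s => 1 - (√s)⁻¹) atTop (nhds 1) := by
      simpa using tendsto_const_nhds.sub h_sqrt.inv_tendsto_atTop
    have h' := ((continuousAt_rpow_const 1 a (Or.inl one_ne_zero)).tendsto.comp h)
    rw [one_rpow] at h'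
    refine h'.congr' ?_
    filter_upwards [eventually_gt_atTop 0] with s hs
    simp [sub_div, div_self hs.ne', sqrt_div_self]
  refine tendsto_of_tendsto_of_tendsto_of_le_of_le' (by simpa using tendsto_const_nhds.sub h_exp)
    (by simpa using h_exp_mul.add h_ratio) ?_ ?_
  · filter_upwards [eventually_gt_atTop 1] with s hs
    exact one_sub_exp_neg_le_rpow_neg_mul_exp_neg_mul_integral ha₁ ha₀ (sqrt_nonneg s)
      (sqrt_lt_self_iff.2 hs)
  · filter_upwards [eventually_gt_atTop 1] with s hs
    exact rpow_neg_mul_exp_neg_mul_integral_le ha₁ ha₀ (sqrt_nonneg s) (sqrt_lt_self_iff.2 hs)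

end ExpMulRpow

/-- For `H ∈ (1/2, 1)` and
`g(z) = e^(-z) ∫_0^z e^v v^(H-3/2) dv`, one has `s^(3/2-H) g(s) → 1` as `s → ∞`. -/
theorem stmt15 (H : ℝ) (hH : H ∈ Ioo (1 / 2 : ℝ) 1) :
    Tendsto (fun s : ℝ =>
        s ^ (3 / 2 - H) * (Real.exp (-s) * ∫ v in (0 : ℝ)..s, Real.exp v * v ^ (H - 3 / 2)))
      atTop (nhds 1) := by
  rw [show 3 / 2 - H = -(H - 3 / 2) by ring]
  exact tendsto_rpow_neg_mul_exp_neg_mul_integral_exp_mul_rpow (by linarith [hH.1])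
    (by linarith [hH.2])
end

section
/- Let α, β, γ ∈ ℝ satisfy α > -1, β > -1, γ > -1 and α + β + γ > -2. Then ∫_{[0,1]²} x^α · y^β · |x-y|^γ dx dy = ( B(β+1, γ+1) + B(α+1, γ+1) ) / (α + β + γ + 2). -/
/-! Up to the null diagonal, the square splits into the triangles `y ≤ x` and `x < y`, and
swapping the coordinates maps the second onto the first with `α` and `β` exchanged. On the
triangle `y ≤ x`, the inner integral `∫₀ˣ y^β (x-y)^γ dy = x^(β+γ+1) B(β+1, γ+1)` is the scaled
Beta integral, and the outer one is `∫₀¹ x^(α+β+γ+1) dx = 1/(α+β+γ+2)`. -/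

open MeasureTheory Set

lemma ofReal_eulerBeta {s t : ℝ} (hs : 0 < s) (ht : 0 < t) :
    (eulerBeta s t : ℂ) = Complex.betaIntegral s t := by
  have hΓ : Complex.Gamma (s + t) ≠ 0 := by
    rw [← Complex.ofReal_add, Complex.Gamma_ofReal]
    exact_mod_cast (Real.Gamma_pos_of_pos (add_pos hs ht)).ne'
  rw [eulerBeta, eq_comm, ← mul_right_inj' hΓ, ← Complex.Gamma_mul_Gamma_eq_betaIntegral
    (by simpa) (by simpa)]
  push_cast [← Complex.Gamma_ofReal]
  field_simp

lemma intervalIntegrable_rpow_mul_sub_rpow {b c x : ℝ} (hb : -1 < b) (hc : -1 < c)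
    (hx : 0 < x) : IntervalIntegrable (fun y => y ^ b * (x - y) ^ c) volume 0 x := by
  -- each factor is singular at one endpoint only and continuous on the half away from it
  refine IntervalIntegrable.trans (b := x / 2) ?_ ?_
  · refine (intervalIntegral.intervalIntegrable_rpow' hb).mul_continuousOn
      (ContinuousOn.rpow_const (by fun_prop) fun y hy => Or.inl ?_)
    rw [uIcc_of_le (by positivity)] at hy
    linarith [hy.2]
  · have h := (intervalIntegral.intervalIntegrable_rpow' hc (a := 0) (b := x / 2)).comp_sub_left x
    rw [sub_zero, sub_half] at h
    refine h.symm.continuousOn_mul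
      (ContinuousOn.rpow_const (by fun_prop) fun y hy => Or.inl ?_)
    rw [uIcc_of_le (by linarith)] at hy
    linarith [hy.1]

lemma integral_rpow_mul_sub_rpow {b c x : ℝ} (hb : -1 < b) (hc : -1 < c) (hx : 0 < x) :
    ∫ y in 0..x, y ^ b * (x - y) ^ c = x ^ (b + c + 1) * eulerBeta (b + 1) (c + 1) := by
  apply Complex.ofReal_injective
  have h := Complex.betaIntegral_scaled (b + 1 : ℝ) (c + 1 : ℝ) hx
  rw [← ofReal_eulerBeta (by linarith) (by linarith)] at h
  rw [Complex.ofReal_mul, Complex.ofReal_cpow hx.le, ← intervalIntegral.integral_ofReal]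
  convert h using 1
  · refine intervalIntegral.integral_congr fun y hy => ?_
    rw [uIcc_of_le hx.le] at hy
    push_cast
    rw [add_sub_cancel_right, add_sub_cancel_right, Complex.ofReal_cpow hy.1, ← Complex.ofReal_sub,
      Complex.ofReal_cpow (sub_nonneg.2 hy.2)]
  · push_cast
    ring_nf

noncomputable def rpowDiffKernel (a b c : ℝ) (p : ℝ × ℝ) : ℝ :=
  p.1 ^ a * p.2 ^ b * |p.1 - p.2| ^ c

lemma rpowDiffKernel_swap (a b c : ℝ) (p : ℝ × ℝ) :
    rpowDiffKernel b a c p.swap = rpowDiffKernel a b c p := by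
  simp only [rpowDiffKernel, Prod.fst_swap, Prod.snd_swap, abs_sub_comm]
  ring

lemma ae_prod_fst_ne_snd {μ ν : Measure ℝ} [SFinite ν] [NullSingletonClass ν] :
    ∀ᵐ p ∂μ.prod ν, p.1 ≠ p.2 :=
  (Measure.ae_prod_iff_ae_ae (measurableSet_eq_fun measurable_fst measurable_snd).compl).2 <|
    .of_forall fun x => (ν.ae_ne x).mono fun _ h => h.symm

lemma restrict_Icc_zero_one_eq_Ioc :
    volume.restrict (Icc (0 : ℝ) 1) = volume.restrict (Ioc 0 1) :=
  Measure.restrict_congr_set Ioc_ae_eq_Icc.symm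

lemma ae_restrict_Icc_zero_one_mem_Ioc :
    ∀ᵐ x ∂volume.restrict (Icc (0 : ℝ) 1), x ∈ Ioc 0 1 := by
  rw [restrict_Icc_zero_one_eq_Ioc]
  exact ae_restrict_mem measurableSet_Ioc

lemma restrict_Icc_zero_one_restrict_Iic {x : ℝ} (hx : x ≤ 1) :
    (volume.restrict (Icc (0 : ℝ) 1)).restrict (Iic x) = volume.restrict (Ioc 0 x) := by
  rw [Measure.restrict_restrict measurableSet_Iic, Measure.restrict_congr_set Ioc_ae_eq_Icc]
  congr 1
  ext y
  simp only [mem_inter_iff, mem_Iic, mem_Icc]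
  exact ⟨fun h => ⟨h.2.1, h.1⟩, fun h => ⟨h.2, h.1, h.2.trans hx⟩⟩

lemma indicator_lowerTriangle_rpowDiffKernel_apply (a b c x : ℝ) :
    (fun y => {p : ℝ × ℝ | p.2 ≤ p.1}.indicator (rpowDiffKernel a b c) (x, y)) =
      (Iic x).indicator (fun y => x ^ a * (y ^ b * (x - y) ^ c)) := by
  ext y
  by_cases hy : y ≤ x
  · simp [indicator_of_mem, hy, rpowDiffKernel, abs_of_nonneg (sub_nonneg.2 hy), mul_assoc]
  · simp [indicator_of_notMem, hy]

lemma integrable_lowerTriangle_rpowDiffKernel_slice {a b c x : ℝ} (hb : -1 < b) (hc : -1 < c)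
    (hx : x ∈ Ioc (0 : ℝ) 1) :
    Integrable (fun y => {p : ℝ × ℝ | p.2 ≤ p.1}.indicator (rpowDiffKernel a b c) (x, y))
      (volume.restrict (Icc 0 1)) := by
  rw [indicator_lowerTriangle_rpowDiffKernel_apply, integrable_indicator_iff measurableSet_Iic,
    IntegrableOn, restrict_Icc_zero_one_restrict_Iic hx.2]
  exact (intervalIntegrable_iff_integrableOn_Ioc_of_le hx.1.le).1 <|
    (intervalIntegrable_rpow_mul_sub_rpow hb hc hx.1).const_mul _

lemma integral_lowerTriangle_rpowDiffKernel_slice {a b c x : ℝ} (hb : -1 < b) (hc : -1 < c)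
    (hx : x ∈ Ioc (0 : ℝ) 1) :
    ∫ y in Icc 0 1, {p : ℝ × ℝ | p.2 ≤ p.1}.indicator (rpowDiffKernel a b c) (x, y) =
      x ^ (a + b + c + 1) * eulerBeta (b + 1) (c + 1) := by
  rw [indicator_lowerTriangle_rpowDiffKernel_apply, integral_indicator measurableSet_Iic,
    restrict_Icc_zero_one_restrict_Iic hx.2, ← intervalIntegral.integral_of_le hx.1.le,
    intervalIntegral.integral_const_mul, integral_rpow_mul_sub_rpow hb hc hx.1, ← mul_assoc,
    ← Real.rpow_add hx.1]
  ring_nf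

lemma lowerTriangle_rpowDiffKernel_nonneg {a b c x y : ℝ} (hx : 0 ≤ x) (hy : 0 ≤ y) :
    0 ≤ {p : ℝ × ℝ | p.2 ≤ p.1}.indicator (rpowDiffKernel a b c) (x, y) :=
  indicator_apply_nonneg fun _ => by dsimp only [rpowDiffKernel]; positivity

lemma integrable_lowerTriangle_rpowDiffKernel {a b c : ℝ} (hb : -1 < b) (hc : -1 < c)
    (hs : -2 < a + b + c) :
    Integrable ({p : ℝ × ℝ | p.2 ≤ p.1}.indicator (rpowDiffKernel a b c))
      ((volume.restrict (Icc 0 1)).prod (volume.restrict (Icc 0 1))) := by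
  have hmeas : Measurable ({p : ℝ × ℝ | p.2 ≤ p.1}.indicator (rpowDiffKernel a b c)) :=
    (by unfold rpowDiffKernel; fun_prop : Measurable (rpowDiffKernel a b c)).indicator
      (measurableSet_le measurable_snd measurable_fst)
  rw [integrable_prod_iff hmeas.aestronglyMeasurable]
  refine ⟨ae_restrict_Icc_zero_one_mem_Ioc.mono fun x hx =>
    integrable_lowerTriangle_rpowDiffKernel_slice hb hc hx, ?_⟩
  have hout : Integrable (fun x : ℝ => x ^ (a + b + c + 1) * eulerBeta (b + 1) (c + 1))
      (volume.restrict (Icc 0 1)) := by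
    rw [restrict_Icc_zero_one_eq_Ioc]
    exact (intervalIntegrable_iff_integrableOn_Ioc_of_le zero_le_one).1 <|
      (intervalIntegral.intervalIntegrable_rpow' (by linarith)).mul_const _
  refine hout.congr (ae_restrict_Icc_zero_one_mem_Ioc.mono fun x hx => ?_)
  dsimp only
  rw [← integral_lowerTriangle_rpowDiffKernel_slice hb hc hx]
  refine integral_congr_ae ((ae_restrict_mem measurableSet_Icc).mono fun y hy => ?_)
  exact (Real.norm_of_nonneg (lowerTriangle_rpowDiffKernel_nonneg hx.1.le hy.1)).symm

lemma integral_lowerTriangle_rpowDiffKernel {a b c : ℝ} (hb : -1 < b) (hc : -1 < c)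
    (hs : -2 < a + b + c) :
    ∫ p, {p : ℝ × ℝ | p.2 ≤ p.1}.indicator (rpowDiffKernel a b c) p
        ∂(volume.restrict (Icc 0 1)).prod (volume.restrict (Icc 0 1)) =
      eulerBeta (b + 1) (c + 1) / (a + b + c + 2) := by
  rw [integral_prod _ (integrable_lowerTriangle_rpowDiffKernel hb hc hs)]
  calc ∫ x in Icc 0 1, ∫ y in Icc 0 1,
          {p : ℝ × ℝ | p.2 ≤ p.1}.indicator (rpowDiffKernel a b c) (x, y)
      _ = ∫ x in Icc 0 1, x ^ (a + b + c + 1) * eulerBeta (b + 1) (c + 1) :=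
        integral_congr_ae <| ae_restrict_Icc_zero_one_mem_Ioc.mono fun x hx =>
          integral_lowerTriangle_rpowDiffKernel_slice hb hc hx
      _ = (∫ x in 0..1, x ^ (a + b + c + 1)) * eulerBeta (b + 1) (c + 1) := by
        rw [restrict_Icc_zero_one_eq_Ioc, ← intervalIntegral.integral_of_le zero_le_one,
          intervalIntegral.integral_mul_const]
      _ = eulerBeta (b + 1) (c + 1) / (a + b + c + 2) := by
        rw [integral_rpow (Or.inl (by linarith)), Real.one_rpow, Real.zero_rpow (by linarith)]
        ring_nf

lemma rpowDiffKernel_eq_lowerTriangle_add_swap {a b c : ℝ} {p : ℝ × ℝ} (hp : p.1 ≠ p.2) :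
    rpowDiffKernel a b c p = {p : ℝ × ℝ | p.2 ≤ p.1}.indicator (rpowDiffKernel a b c) p +
      {p : ℝ × ℝ | p.2 ≤ p.1}.indicator (rpowDiffKernel b a c) p.swap := by
  rcases hp.lt_or_gt with h | h
  · simp [indicator, h.not_ge, h.le, rpowDiffKernel_swap]
  · simp [indicator, h.not_ge, h.le]

/-- For `α, β, γ > -1` with `α + β + γ > -2`,
`∫_{[0,1]²} x^α y^β |x-y|^γ dx dy = (B(β+1, γ+1) + B(α+1, γ+1)) / (α+β+γ+2)`. -/
theorem stmt18 (α β γ : ℝ) (hα : -1 < α) (hβ : -1 < β) (hγ : -1 < γ)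
    (hsum : -2 < α + β + γ) :
    (∫ p in (Icc (0 : ℝ) 1) ×ˢ (Icc (0 : ℝ) 1),
        p.1 ^ α * p.2 ^ β * |p.1 - p.2| ^ γ)
      = (eulerBeta (β + 1) (γ + 1) + eulerBeta (α + 1) (γ + 1)) / (α + β + γ + 2) := by
  set μ := volume.restrict (Icc (0 : ℝ) 1)
  have hsquare : volume.restrict (Icc (0 : ℝ) 1 ×ˢ Icc (0 : ℝ) 1) = μ.prod μ := by
    rw [Measure.volume_eq_prod, Measure.prod_restrict]
  have hsplit := (ae_prod_fst_ne_snd (μ := μ) (ν := μ)).mono fun p hp =>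
    rpowDiffKernel_eq_lowerTriangle_add_swap (a := α) (b := β) (c := γ) hp
  change ∫ p in _, rpowDiffKernel α β γ p = _
  rw [hsquare, integral_congr_ae hsplit,
    integral_add (integrable_lowerTriangle_rpowDiffKernel hβ hγ hsum)
      (by exact (integrable_lowerTriangle_rpowDiffKernel hα hγ (by linarith)).swap),
    integral_prod_swap, integral_lowerTriangle_rpowDiffKernel hβ hγ hsum,
    integral_lowerTriangle_rpowDiffKernel hα hγ (by linarith), add_comm β α, add_div]
end
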